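/- arXiv:2605.30113 — 6 statements merged into one kernel-verified Lean document; each statement's English description precedes it below -/
import Mathlib

section
/- Duality bound for low-degree correlation (Proposition 3.1): Let Y be a random vector in ℝ^N measurable with respect to a pair of random elements (W, θ), and let x be a square-integrable real random variable with E[x²] > 0, all on a common probability space. Let (φ_α(Y))_{α ∈ 𝒢} be a family of polynomial functions of Y that spans the space ℝ_D[Y] of all polynomials of degree at most D in the entries of Y, and let (ψ_p(W,θ))_{p ∈ 𝒫} be an orthonormal family in L² (E[ψ_p ψ_{p'}] = 1 if p = p' and 0 otherwise). Define c = (c_α)_{α ∈ 𝒢} with c_α = E[φ_α(Y)·x] and M = (M_{p,α}) with M_{p,α} = E[φ_α(Y)·ψ_p(W,θ)]. Then Corr_{≤D} ≤ (1/√(E[x²])) · inf{ ‖u‖_{ℓ²(𝒫)} : u ∈ ℓ²(𝒫) with Σ_{p} M_{p,α} u_p = c_α for all α ∈ 𝒢 } (with the convention that the infimum is +∞ if no such u exists). Moreover, if every element of ℝ_D[Y] lies in the closed linear span of (ψ_p)_{p ∈ 𝒫}, then this inequality is an equality. -/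
open MeasureTheory ProbabilityTheory Filter

/-- The degree-D maximum correlation: the supremum, over real multivariate polynomials
f of degree at most D in the entries of Y, of E[f(Y)·x]/√(E[f(Y)²]·E[x²]). -/
noncomputable def Corr {Ω : Type*} [MeasurableSpace Ω] (μ : Measure Ω)
    {ι : Type*} [Fintype ι] (Y : Ω → ι → ℝ) (x : Ω → ℝ) (D : ℕ) : ℝ :=
  sSup {t : ℝ | ∃ f : MvPolynomial ι ℝ, f.totalDegree ≤ D ∧
    t = (∫ ω, MvPolynomial.eval (Y ω) f * x ω ∂μ) /
        Real.sqrt ((∫ ω, (MvPolynomial.eval (Y ω) f) ^ 2 ∂μ) * (∫ ω, (x ω) ^ 2 ∂μ))}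

/-! In `L²(μ)` let `X`, `Φ_α`, `Ψ_p` be the classes of `x`, `φ_α(Y)`, `ψ_p(Z)`, and `K` the
finite-dimensional space `ℝ_D[Y]`, spanned by the `Φ_α`. Then `Corr_{≤D}` is the supremum of `⟪w, X⟫ / (‖w‖ ‖X‖)` over `w ∈ K`, which is
`‖P_K X‖ / ‖X‖`. A feasible `u` gives `⟪Φ_α, X⟫ = ∑ₚ ⟪Φ_α, Ψ_p⟫ u_p` for every `α`, hence for
every `w ∈ K` by linearity, and Bessel's inequality with Cauchy–Schwarz bounds this by `‖w‖ ‖u‖`.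
If `K` lies in the closed span of the `Ψ_p`, Parseval's identity shows that `u_p = ⟪Ψ_p, P_K X⟫`
is feasible with `‖u‖ = ‖P_K X‖`, so the bound is attained. -/

open Submodule Set
open scoped RealInnerProductSpace

theorem le_sqrt_tsum_sq_mul_sqrt_tsum_sq_of_hasSum {P : Type*} {a b : P → ℝ} {s : ℝ}
    (ha : Summable fun p => a p ^ 2) (hb : Summable fun p => b p ^ 2)
    (h : HasSum (fun p => a p * b p) s) :
    s ≤ √(∑' p, a p ^ 2) * √(∑' p, b p ^ 2) :=
  le_of_tendsto' h fun t => (Real.sum_mul_le_sqrt_mul_sqrt t a b).trans <| by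
    gcongr
    exacts [ha.sum_le_tsum t fun _ _ => sq_nonneg _, hb.sum_le_tsum t fun _ _ => sq_nonneg _]

section InnerProductSpace

variable {H : Type*} [NormedAddCommGroup H] [InnerProductSpace ℝ H] {P : Type*} {Ψ : P → H}

theorem Orthonormal.le_norm_mul_sqrt_tsum_sq_of_hasSum (hΨ : Orthonormal ℝ Ψ) {u : P → ℝ}
    (hu : Summable fun p => u p ^ 2) {v : H} {s : ℝ}
    (h : HasSum (fun p => ⟪v, Ψ p⟫ * u p) s) :
    s ≤ ‖v‖ * √(∑' p, u p ^ 2) := by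
  have hsq : ∀ p, ‖⟪Ψ p, v⟫‖ ^ 2 = ⟪v, Ψ p⟫ ^ 2 := fun p => by
    rw [Real.norm_eq_abs, sq_abs, real_inner_comm]
  have hbessel : ∑' p, ⟪v, Ψ p⟫ ^ 2 ≤ ‖v‖ ^ 2 := by
    simpa only [hsq] using hΨ.tsum_inner_products_le v
  refine (le_sqrt_tsum_sq_mul_sqrt_tsum_sq_of_hasSum ?_ hu h).trans ?_
  · simpa only [hsq] using hΨ.inner_products_summable v
  · gcongr
    exact (Real.sqrt_le_sqrt hbessel).trans_eq (Real.sqrt_sq (norm_nonneg v))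

theorem Orthonormal.hasSum_inner_mul_inner_of_mem_topologicalClosure [CompleteSpace H]
    (hΨ : Orthonormal ℝ Ψ) (v : H) {x : H}
    (hx : x ∈ (span ℝ (range Ψ)).topologicalClosure) :
    HasSum (fun p => ⟪v, Ψ p⟫ * ⟪Ψ p, x⟫) ⟪v, x⟫ := by
  -- In the closed span `U`, the `Ψ p` form a Hilbert basis.
  set U := (span ℝ (range Ψ)).topologicalClosure
  have : CompleteSpace U := (span ℝ (range Ψ)).isClosed_topologicalClosure.completeSpace_coe
  let ΨU : P → U := fun p => ⟨Ψ p, le_topologicalClosure _ (subset_span ⟨p, rfl⟩)⟩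
  have hΨU : Orthonormal ℝ ΨU := U.subtypeₗᵢ.orthonormal_comp_iff.mp hΨ
  have himage : ((↑) : U → H) '' span ℝ (range ΨU) = span ℝ (range Ψ) := by
    rw [← U.coe_subtype, ← Submodule.map_coe, Submodule.map_span, ← range_comp]
    rfl
  have hdense : ⊤ ≤ (span ℝ (range ΨU)).topologicalClosure := by
    rw [top_le_iff, ← Submodule.dense_iff_topologicalClosure_eq_top,
      Topology.IsInducing.subtypeVal.dense_iff]
    rintro ⟨z, hz⟩
    rwa [Submodule.topologicalClosure_coe, ← himage] at hz
  have hxU : U.orthogonalProjectionOnto x = ⟨x, hx⟩ :=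
    orthogonalProjectionOnto_mem_subspace_eq_self ⟨x, hx⟩
  have := (HilbertBasis.mk hΨU hdense).hasSum_orthogonalProjectionOnto x
  rw [HilbertBasis.coe_mk, hxU] at this
  simpa [ΨU, inner_smul_right, mul_comm] using this.mapL ((innerSL ℝ v).comp U.subtypeL)

theorem hasSum_inner_mul_of_mem_span {G : Type*} {Φ : G → H} {u : P → ℝ} {X : H}
    (hfeas : ∀ α, HasSum (fun p => ⟪Φ α, Ψ p⟫ * u p) ⟪Φ α, X⟫) {w : H}
    (hw : w ∈ span ℝ (range Φ)) :
    HasSum (fun p => ⟪w, Ψ p⟫ * u p) ⟪w, X⟫ := by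
  induction hw using Submodule.span_induction with
  | mem w hw => obtain ⟨α, rfl⟩ := hw; exact hfeas α
  | zero => simp
  | add a b _ _ ha hb => simpa only [inner_add_left, add_mul] using ha.add hb
  | smul r a _ ha => simpa only [real_inner_smul_left, mul_assoc] using ha.mul_left r

theorem inner_div_norm_mul_norm_le {w X : H} {C : ℝ} (hC : 0 ≤ C) (h : ⟪w, X⟫ ≤ ‖w‖ * C) :
    ⟪w, X⟫ / (‖w‖ * ‖X‖) ≤ C / ‖X‖ := by
  rcases (norm_nonneg w).eq_or_lt with hw | hw
  · rw [← hw, zero_mul, div_zero]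
    positivity
  · rw [← mul_div_mul_left C ‖X‖ hw.ne']
    gcongr

theorem isGreatest_inner_div_norm_mul_norm (K : Submodule ℝ H) [K.HasOrthogonalProjection]
    (X : H) :
    IsGreatest ((fun w => ⟪w, X⟫ / (‖w‖ * ‖X‖)) '' K) (‖K.starProjection X‖ / ‖X‖) := by
  have hproj : ∀ w ∈ K, ⟪w, X⟫ = ⟪w, K.starProjection X⟫ := fun w hw =>
    (inner_orthogonalProjectionOnto_eq_of_mem_left ⟨w, hw⟩ X).symm
  refine ⟨⟨_, K.starProjection_apply_mem X, ?_⟩, ?_⟩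
  · rcases (norm_nonneg (K.starProjection X)).eq_or_lt with h | h
    · simp [← h]
    · dsimp only
      rw [hproj _ (K.starProjection_apply_mem X), real_inner_self_eq_norm_sq, sq,
        mul_div_mul_left _ _ h.ne']
  · rintro _ ⟨w, hw, rfl⟩
    refine inner_div_norm_mul_norm_le (norm_nonneg _) ?_
    rw [hproj w hw]
    exact real_inner_le_norm _ _

theorem isLeast_sqrt_tsum_sq_of_le_topologicalClosure [CompleteSpace H] (hΨ : Orthonormal ℝ Ψ)
    {G : Type*} {Φ : G → H} [(span ℝ (range Φ)).HasOrthogonalProjection]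
    (hcl : span ℝ (range Φ) ≤ (span ℝ (range Ψ)).topologicalClosure) (X : H) :
    IsLeast {t | ∃ u : P → ℝ, Summable (fun p => u p ^ 2) ∧
        (∀ α, HasSum (fun p => ⟪Φ α, Ψ p⟫ * u p) ⟪Φ α, X⟫) ∧ t = √(∑' p, u p ^ 2)}
      ‖(span ℝ (range Φ)).starProjection X‖ := by
  set K := span ℝ (range Φ)
  set xs := K.starProjection X
  have hxs : xs ∈ K := K.starProjection_apply_mem X
  have hproj : ∀ w ∈ K, ⟪w, X⟫ = ⟪w, xs⟫ := fun w hw =>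
    (inner_orthogonalProjectionOnto_eq_of_mem_left ⟨w, hw⟩ X).symm
  have hparseval : ∀ v, HasSum (fun p => ⟪v, Ψ p⟫ * ⟪Ψ p, xs⟫) ⟪v, xs⟫ := fun v =>
    hΨ.hasSum_inner_mul_inner_of_mem_topologicalClosure v (hcl hxs)
  have hsq : HasSum (fun p => ⟪Ψ p, xs⟫ ^ 2) (‖xs‖ ^ 2) := by
    simpa only [real_inner_comm xs, ← sq, real_inner_self_eq_norm_sq] using hparseval xs
  refine ⟨⟨fun p => ⟪Ψ p, xs⟫, hsq.summable, fun α => ?_, ?_⟩, ?_⟩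
  · rw [hproj _ (subset_span ⟨α, rfl⟩)]
    exact hparseval (Φ α)
  · rw [hsq.tsum_eq, Real.sqrt_sq (norm_nonneg xs)]
  · rintro _ ⟨u, hu, hfeas, rfl⟩
    have h := hΨ.le_norm_mul_sqrt_tsum_sq_of_hasSum hu (hasSum_inner_mul_of_mem_span hfeas hxs)
    rw [hproj xs hxs, real_inner_self_eq_norm_sq] at h
    nlinarith [norm_nonneg xs, Real.sqrt_nonneg (∑' p, u p ^ 2)]

end InnerProductSpace

section L2

variable {Ω : Type*} [MeasurableSpace Ω] {μ : Measure Ω}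

theorem MeasureTheory.MemLp.toLp_mem_span {𝕜 E : Type*} [NormedField 𝕜] [NormedAddCommGroup E]
    [NormedSpace 𝕜 E] {p : ENNReal} {G : Type*} {φ : G → Ω → E} (hφ : ∀ α, MemLp (φ α) p μ)
    {v : Ω → E} (hv : v ∈ span 𝕜 (range φ)) :
    ∃ hvp : MemLp v p μ, hvp.toLp v ∈ span 𝕜 (range fun α => (hφ α).toLp (φ α)) := by
  induction hv using Submodule.span_induction with
  | mem v hv =>
    obtain ⟨α, rfl⟩ := hv
    exact ⟨hφ α, subset_span ⟨α, rfl⟩⟩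
  | zero => exact ⟨MemLp.zero, by rw [MemLp.toLp_zero]; exact zero_mem _⟩
  | add v w _ _ hv hw =>
    obtain ⟨hvp, hv⟩ := hv
    obtain ⟨hwp, hw⟩ := hw
    exact ⟨hvp.add hwp, by rw [MemLp.toLp_add hvp hwp]; exact add_mem hv hw⟩
  | smul r v _ hv =>
    obtain ⟨hvp, hv⟩ := hv
    exact ⟨hvp.const_smul r, by rw [MemLp.toLp_const_smul r hvp]; exact smul_mem _ r hv⟩

theorem MeasureTheory.MemLp.inner_toLp {f g : Ω → ℝ} (hf : MemLp f 2 μ) (hg : MemLp g 2 μ) :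
    ⟪hf.toLp f, hg.toLp g⟫ = ∫ ω, f ω * g ω ∂μ := by
  rw [L2.inner_def]
  refine integral_congr_ae ?_
  filter_upwards [hf.coeFn_toLp, hg.coeFn_toLp] with ω hfω hgω
  rw [hfω, hgω, real_inner_eq_re_inner, RCLike.inner_apply, conj_trivial, mul_comm]
  rfl

theorem MeasureTheory.MemLp.norm_toLp_eq_sqrt_integral_sq {f : Ω → ℝ} (hf : MemLp f 2 μ) :
    ‖hf.toLp f‖ = √(∫ ω, f ω ^ 2 ∂μ) := by
  simp only [norm_eq_sqrt_real_inner, hf.inner_toLp, sq]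

variable {ι : Type*}

noncomputable def MvPolynomial.evalToLp (Y : Ω → ι → ℝ) (D : ℕ) (p : ENNReal)
    (hY : ∀ f : MvPolynomial ι ℝ, f.totalDegree ≤ D →
      MemLp (fun ω => MvPolynomial.eval (Y ω) f) p μ) :
    MvPolynomial.restrictTotalDegree ι ℝ D →ₗ[ℝ] Lp ℝ p μ where
  toFun f := (hY f ((MvPolynomial.mem_restrictTotalDegree _ _ _).1 f.2)).toLp _
  map_add' f g := by
    rw [← MemLp.toLp_add]
    exact MemLp.toLp_congr _ _ (Eventually.of_forall fun ω => by simp)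
  map_smul' r f := by
    rw [RingHom.id_apply, ← MemLp.toLp_const_smul]
    exact MemLp.toLp_congr _ _ (Eventually.of_forall fun ω => by simp [MvPolynomial.smul_eval])

theorem MvPolynomial.range_evalToLp_eq_span {Y : Ω → ι → ℝ} {D : ℕ} {p : ENNReal}
    (hY : ∀ f : MvPolynomial ι ℝ, f.totalDegree ≤ D →
      MemLp (fun ω => MvPolynomial.eval (Y ω) f) p μ)
    {G : Type*} {φ : G → MvPolynomial ι ℝ} (hφ : ∀ α, (φ α).totalDegree ≤ D)
    (hspan : ∀ f : MvPolynomial ι ℝ, f.totalDegree ≤ D →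
      (fun ω => MvPolynomial.eval (Y ω) f) ∈
        span ℝ (range fun α => fun ω => MvPolynomial.eval (Y ω) (φ α))) :
    LinearMap.range (MvPolynomial.evalToLp Y D p hY) =
      span ℝ (range fun α => (hY (φ α) (hφ α)).toLp _) := by
  refine le_antisymm ?_ (span_le.2 ?_)
  · rintro _ ⟨f, rfl⟩
    obtain ⟨_, hf⟩ := MemLp.toLp_mem_span (fun α => hY (φ α) (hφ α))
      (hspan f ((MvPolynomial.mem_restrictTotalDegree _ _ _).1 f.2))
    exact hf
  · rintro _ ⟨α, rfl⟩
    exact ⟨⟨φ α, (MvPolynomial.mem_restrictTotalDegree _ _ _).2 (hφ α)⟩, rfl⟩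

theorem Corr_eq_sSup_image_range_evalToLp [Fintype ι] (Y : Ω → ι → ℝ) (x : Ω → ℝ) (D : ℕ)
    (hY : ∀ f : MvPolynomial ι ℝ, f.totalDegree ≤ D →
      MemLp (fun ω => MvPolynomial.eval (Y ω) f) 2 μ) (hx : MemLp x 2 μ) :
    Corr μ Y x D = sSup ((fun w => ⟪w, hx.toLp x⟫ / (‖w‖ * ‖hx.toLp x‖)) ''
      LinearMap.range (MvPolynomial.evalToLp Y D 2 hY)) := by
  have hratio : ∀ (f : MvPolynomial ι ℝ) (hf : f.totalDegree ≤ D),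
      ⟪(hY f hf).toLp _, hx.toLp x⟫ / (‖(hY f hf).toLp _‖ * ‖hx.toLp x‖) =
        (∫ ω, MvPolynomial.eval (Y ω) f * x ω ∂μ) /
          √((∫ ω, (MvPolynomial.eval (Y ω) f) ^ 2 ∂μ) * ∫ ω, x ω ^ 2 ∂μ) := fun f hf => by
    rw [MemLp.inner_toLp, MemLp.norm_toLp_eq_sqrt_integral_sq,
      MemLp.norm_toLp_eq_sqrt_integral_sq, ← Real.sqrt_mul (integral_nonneg fun _ => sq_nonneg _)]
  unfold Corr
  congr 1
  ext t
  constructor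
  · rintro ⟨f, hf, rfl⟩
    exact ⟨_, ⟨⟨f, (MvPolynomial.mem_restrictTotalDegree _ _ _).2 hf⟩, rfl⟩, hratio f hf⟩
  · rintro ⟨_, ⟨f, rfl⟩, rfl⟩
    have hf := (MvPolynomial.mem_restrictTotalDegree _ _ _).1 f.2
    exact ⟨f, hf, hratio f hf⟩

end L2

theorem duality_bound_general
    {Ω γ : Type*} [MeasurableSpace Ω]
    (μ : Measure Ω)
    (N D : ℕ) (Z : Ω → γ)
    (g : γ → Fin N → ℝ)
    (x : Ω → ℝ) (hx : MemLp x 2 μ)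
    {G P : Type*} [DecidableEq P] (φ : G → MvPolynomial (Fin N) ℝ)
    (hφdeg : ∀ α, (φ α).totalDegree ≤ D)
    (hspan : ∀ f : MvPolynomial (Fin N) ℝ, f.totalDegree ≤ D →
      (fun ω => MvPolynomial.eval (g (Z ω)) f) ∈
        Submodule.span ℝ
          (Set.range fun α => fun ω => MvPolynomial.eval (g (Z ω)) (φ α)))
    (ψ : P → γ → ℝ) (hψL2 : ∀ p, MemLp (fun ω => ψ p (Z ω)) 2 μ)
    (hON : ∀ p q : P,
      (∫ ω, ψ p (Z ω) * ψ q (Z ω) ∂μ) = if p = q then 1 else 0)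
    (hfL2 : ∀ f : MvPolynomial (Fin N) ℝ, f.totalDegree ≤ D →
      MemLp (fun ω => MvPolynomial.eval (g (Z ω)) f) 2 μ)
    (c : G → ℝ) (hc : ∀ α, c α = ∫ ω, MvPolynomial.eval (g (Z ω)) (φ α) * x ω ∂μ)
    (M : P → G → ℝ)
    (hM : ∀ p α, M p α = ∫ ω, MvPolynomial.eval (g (Z ω)) (φ α) * ψ p (Z ω) ∂μ) :
    (∀ u : P → ℝ, Summable (fun p => (u p) ^ 2) →
      (∀ α, HasSum (fun p => M p α * u p) (c α)) →
      Corr μ (fun ω => g (Z ω)) x D ≤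
        Real.sqrt (∑' p, (u p) ^ 2) / Real.sqrt (∫ ω, x ω ^ 2 ∂μ)) ∧
    ((∀ (f : MvPolynomial (Fin N) ℝ) (hdf : f.totalDegree ≤ D),
        (hfL2 f hdf).toLp _ ∈
          closure (↑(Submodule.span ℝ
            (Set.range fun p => ((hψL2 p).toLp _ : Lp ℝ 2 μ))) : Set (Lp ℝ 2 μ))) →
      Corr μ (fun ω => g (Z ω)) x D =
        sInf {t : ℝ | ∃ u : P → ℝ, Summable (fun p => (u p) ^ 2) ∧
            (∀ α, HasSum (fun p => M p α * u p) (c α)) ∧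
            t = Real.sqrt (∑' p, (u p) ^ 2)} /
          Real.sqrt (∫ ω, x ω ^ 2 ∂μ)) := by
  set X := hx.toLp x
  set Ψ' : P → Lp ℝ 2 μ := fun p => (hψL2 p).toLp _
  set Φ' : G → Lp ℝ 2 μ := fun α => (hfL2 (φ α) (hφdeg α)).toLp _
  have hΨ : Orthonormal ℝ Ψ' :=
    orthonormal_iff_ite.2 fun p q => (MemLp.inner_toLp _ _).trans (hON p q)
  have hK := MvPolynomial.range_evalToLp_eq_span hfL2 hφdeg hspan
  have : FiniteDimensional ℝ (span ℝ (range Φ')) := hK ▸ inferInstance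
  obtain rfl : M = fun p α => ⟪Φ' α, Ψ' p⟫ :=
    funext₂ fun p α => (hM p α).trans (MemLp.inner_toLp _ _).symm
  obtain rfl : c = fun α => ⟪Φ' α, X⟫ :=
    funext fun α => (hc α).trans (MemLp.inner_toLp _ _).symm
  rw [Corr_eq_sSup_image_range_evalToLp _ x D hfL2 hx, hK, ← hx.norm_toLp_eq_sqrt_integral_sq]
  refine ⟨fun u hu hfeas => Real.sSup_le ?_ (by positivity), fun hcl => ?_⟩
  · rintro _ ⟨w, hw, rfl⟩
    exact inner_div_norm_mul_norm_le (Real.sqrt_nonneg _)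
      (hΨ.le_norm_mul_sqrt_tsum_sq_of_hasSum hu (hasSum_inner_mul_of_mem_span hfeas hw))
  · have hcl' : span ℝ (range Φ') ≤ (span ℝ (range Ψ')).topologicalClosure := by
      rw [span_le]
      rintro _ ⟨α, rfl⟩
      rw [topologicalClosure_coe]
      exact hcl (φ α) (hφdeg α)
    rw [(isGreatest_inner_div_norm_mul_norm _ X).csSup_eq,
      (isLeast_sqrt_tsum_sq_of_le_topologicalClosure hΨ hcl' X).csInf_eq]

/-- Proposition 3.1 (duality bound for the low-degree correlation).
Y = g(Z) is a random vector in ℝ^N measurable with respect to Z = (W,θ); x is square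
integrable with E[x²] > 0; the polynomials (φ_α)_{α ∈ G} have degree ≤ D and the random
variables φ_α(Y) span ℝ_D[Y]; (ψ_p(Z))_{p ∈ P} is orthonormal in L².  With
c_α = E[φ_α(Y)x] and M_{p,α} = E[φ_α(Y)ψ_p(Z)]:
(i) for every u ∈ ℓ²(P) with Mᵀu = c one has Corr_{≤D} ≤ ‖u‖/√(E[x²])
    (i.e. Corr_{≤D} ≤ inf‖u‖/√(E[x²]), with the convention inf ∅ = +∞), and
(ii) if ℝ_D[Y] is contained in the closed linear span of the ψ_p in L², the inequality
    is an equality. -/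
theorem duality_bound
    {Ω γ : Type*} [MeasurableSpace Ω] [MeasurableSpace γ]
    (μ : Measure Ω) [IsProbabilityMeasure μ]
    (N D : ℕ) (Z : Ω → γ) (hZ : Measurable Z)
    (g : γ → Fin N → ℝ) (hg : Measurable g)
    (x : Ω → ℝ) (hx : MemLp x 2 μ) (hx2 : 0 < ∫ ω, x ω ^ 2 ∂μ)
    {G P : Type*} [DecidableEq P] (φ : G → MvPolynomial (Fin N) ℝ)
    (hφdeg : ∀ α, (φ α).totalDegree ≤ D)
    (hspan : ∀ f : MvPolynomial (Fin N) ℝ, f.totalDegree ≤ D →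
      (fun ω => MvPolynomial.eval (g (Z ω)) f) ∈
        Submodule.span ℝ
          (Set.range fun α => fun ω => MvPolynomial.eval (g (Z ω)) (φ α)))
    (ψ : P → γ → ℝ) (hψL2 : ∀ p, MemLp (fun ω => ψ p (Z ω)) 2 μ)
    (hON : ∀ p q : P,
      (∫ ω, ψ p (Z ω) * ψ q (Z ω) ∂μ) = if p = q then 1 else 0)
    (hfL2 : ∀ f : MvPolynomial (Fin N) ℝ, f.totalDegree ≤ D →
      MemLp (fun ω => MvPolynomial.eval (g (Z ω)) f) 2 μ)
    (c : G → ℝ) (hc : ∀ α, c α = ∫ ω, MvPolynomial.eval (g (Z ω)) (φ α) * x ω ∂μ)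
    (M : P → G → ℝ)
    (hM : ∀ p α, M p α = ∫ ω, MvPolynomial.eval (g (Z ω)) (φ α) * ψ p (Z ω) ∂μ) :
    (∀ u : P → ℝ, Summable (fun p => (u p) ^ 2) →
      (∀ α, HasSum (fun p => M p α * u p) (c α)) →
      Corr μ (fun ω => g (Z ω)) x D ≤
        Real.sqrt (∑' p, (u p) ^ 2) / Real.sqrt (∫ ω, x ω ^ 2 ∂μ)) ∧
    ((∀ (f : MvPolynomial (Fin N) ℝ) (hdf : f.totalDegree ≤ D),
        (hfL2 f hdf).toLp _ ∈
          closure (↑(Submodule.span ℝ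
            (Set.range fun p => ((hψL2 p).toLp _ : Lp ℝ 2 μ))) : Set (Lp ℝ 2 μ))) →
      Corr μ (fun ω => g (Z ω)) x D =
        sInf {t : ℝ | ∃ u : P → ℝ, Summable (fun p => (u p) ^ 2) ∧
            (∀ α, HasSum (fun p => M p α * u p) (c α)) ∧
            t = Real.sqrt (∑' p, (u p) ^ 2)} /
          Real.sqrt (∫ ω, x ω ^ 2 ∂μ)) :=
  duality_bound_general μ N D Z g x hx φ hφdeg hspan ψ hψL2 hON hfL2 c hc M hM
end

section
/- High-probability sparsity of the planted hypergraph (Lemma 5.4): Fix an integer r ≥ 2, reals ξ ∈ (0,1/2], 0 < a < b, and δ ∈ (0,1). Consider the r-uniform planted dense subhypergraph model with ρ = n^{ξ−1}, q₁ = n^{−a}, q₀ = n^{−b}. Call a hypergraph α sparse if |α| ≤ (ξ/a + δ)·|V(α)| (where |α| is its number of edges and V(α) its set of non-isolated vertices), and let 𝓔_D be the event that every subgraph with at most D edges of the planted hypergraph X (the hypergraph on the planted set S = {i : θ_i = 1} whose edges are those hyperedges e ⊆ S with Y_e = 1) is sparse. Then there exists a constant ε = ε(r,a,ξ,δ) >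 0 such that for all sufficiently large n and all D ≤ n^ε, for every A ⊆ [n] with |A| ≤ n^ξ and every σ ∈ {0,1}^A, P(𝓔_D | θ_A = σ) ≥ 1 − (1/2)·n^{−aδ/2}. -/
open MeasureTheory ProbabilityTheory Filter

/-- Bernoulli(ρ) distribution on ℝ, giving mass ρ to `1` and mass 1−ρ to `0`. -/
noncomputable def bern (ρ : ℝ) : Measure ℝ :=
  ENNReal.ofReal ρ • Measure.dirac 1 + ENNReal.ofReal (1 - ρ) • Measure.dirac 0

/-- The type of hyperedges: r-element subsets of [n]. -/
abbrev HEdge (n r : ℕ) := {s : Finset (Fin n) // s.card = r}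

/-- The joint law of (θ, Y) in the r-uniform planted dense subhypergraph model:
θ has i.i.d. Bernoulli(ρ) entries, and conditionally on θ, the edge indicators
Y_e are independent Bernoulli(q₀ + (q₁−q₀)·∏_{i ∈ e} θ_i). -/
noncomputable def pds (n r : ℕ) (ρ q₀ q₁ : ℝ) :
    Measure ((Fin n → ℝ) × (HEdge n r → ℝ)) :=
  (Measure.pi fun _ : Fin n => bern ρ).bind fun θ =>
    (Measure.pi fun e : HEdge n r =>
        bern (q₀ + (q₁ - q₀) * ∏ i ∈ e.1, θ i)).map fun y => (θ, y)

/-- The first coordinate θ₁ of the signal (junk value 0 when n = 0). -/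
noncomputable def firstCoord {n : ℕ} (θ : Fin n → ℝ) : ℝ :=
  if h : 0 < n then θ ⟨0, h⟩ else 0



lemma bern_one (ρ : ℝ) : bern ρ {1} = ENNReal.ofReal ρ := by
  simp [bern, Measure.dirac_apply]

lemma bern_zero (ρ : ℝ) : bern ρ {0} = ENNReal.ofReal (1 - ρ) := by
  simp [bern, Measure.dirac_apply]

lemma bern_univ (ρ : ℝ) : bern ρ Set.univ = ENNReal.ofReal ρ + ENNReal.ofReal (1 - ρ) := by
  simp [bern]

instance bern_finite (ρ : ℝ) : IsFiniteMeasure (bern ρ) := by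
  constructor
  rw [bern_univ]
  exact ENNReal.add_lt_top.2 ⟨ENNReal.ofReal_lt_top, ENNReal.ofReal_lt_top⟩

lemma bern_prob {ρ : ℝ} (h0 : 0 ≤ ρ) (h1 : ρ ≤ 1) : IsProbabilityMeasure (bern ρ) := by
  constructor
  rw [bern_univ, ← ENNReal.ofReal_add h0 (by linarith), add_sub_cancel, ENNReal.ofReal_one]

lemma bern_not01 (ρ : ℝ) : bern ρ {x : ℝ | ¬(x = 0 ∨ x = 1)} = 0 := by
  have h1 : Measure.dirac (1:ℝ) {x : ℝ | ¬(x = 0 ∨ x = 1)} = 0 := by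
    rw [Measure.dirac_apply]
    simp
  have h0 : Measure.dirac (0:ℝ) {x : ℝ | ¬(x = 0 ∨ x = 1)} = 0 := by
    rw [Measure.dirac_apply]
    simp
  simp [bern, h1, h0]

lemma pi_cyl {ι : Type*} [Fintype ι] (μ : ι → Measure ℝ) [∀ i, SigmaFinite (μ i)]
    (hP : ∀ i, μ i Set.univ = 1) (B : Finset ι) (S : ι → Set ℝ) :
    Measure.pi μ {x : ι → ℝ | ∀ i ∈ B, x i ∈ S i} = ∏ i ∈ B, μ i (S i) := by
  classical
  have hset : {x : ι → ℝ | ∀ i ∈ B, x i ∈ S i} =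
      Set.pi Set.univ (fun i => if i ∈ B then S i else Set.univ) := by
    ext x
    simp only [Set.mem_pi, Set.mem_univ, forall_true_left, Set.mem_setOf_eq]
    constructor
    · intro h i
      split_ifs with hi
      · exact h i hi
      · exact Set.mem_univ _
    · intro h i hi
      have := h i
      rwa [if_pos hi] at this
  rw [hset, Measure.pi_pi]
  have : ∀ i, μ i (if i ∈ B then S i else Set.univ) = if i ∈ B then μ i (S i) else 1 := by
    intro i
    split_ifs
    · rfl
    · exact hP i
  simp_rw [this]
  rw [Finset.prod_ite_mem, Finset.univ_inter]



lemma prod01 {ι : Type*} (s : Finset ι) (f : ι → ℝ) (h : ∀ i ∈ s, f i = 0 ∨ f i = 1) :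
    (∏ i ∈ s, f i) = 0 ∨ (∏ i ∈ s, f i) = 1 := by
  classical
  induction s using Finset.induction with
  | empty => simp
  | @insert x s' hx ih =>
    rw [Finset.prod_insert hx]
    rcases h x (Finset.mem_insert_self _ _) with h1 | h1 <;>
      rcases ih (fun i hi => h i (Finset.mem_insert_of_mem hi)) with h2 | h2 <;>
      simp [h1, h2]

/-- the good set of 0/1-valued θ -/
def Good (n : ℕ) : Set (Fin n → ℝ) := {θ | ∀ i, θ i = 0 ∨ θ i = 1}

lemma ae_good {n : ℕ} {ρ : ℝ} (h0 : 0 ≤ ρ) (h1 : ρ ≤ 1) :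
    ∀ᵐ θ ∂(Measure.pi fun _ : Fin n => bern ρ), θ ∈ Good n := by
  rw [MeasureTheory.ae_iff]
  have hsub : {θ : Fin n → ℝ | ¬ θ ∈ Good n} ⊆
      ⋃ i : Fin n, {θ : Fin n → ℝ | ¬(θ i = 0 ∨ θ i = 1)} := by
    intro θ hθ
    simp only [Good, Set.mem_setOf_eq, not_forall] at hθ
    obtain ⟨i, hi⟩ := hθ
    exact Set.mem_iUnion.2 ⟨i, hi⟩
  refine le_antisymm (le_trans (measure_mono hsub) ?_) zero_le
  refine le_trans (measure_iUnion_le _) ?_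
  have : ∀ i : Fin n, (Measure.pi fun _ : Fin n => bern ρ)
      {θ : Fin n → ℝ | ¬(θ i = 0 ∨ θ i = 1)} = 0 := by
    intro i
    have : {θ : Fin n → ℝ | ¬(θ i = 0 ∨ θ i = 1)} =
        {θ : Fin n → ℝ | ∀ j ∈ ({i} : Finset (Fin n)), θ j ∈ {x : ℝ | ¬(x = 0 ∨ x = 1)}} := by
      ext θ; simp
    rw [this, pi_cyl _ (fun _ => (bern_prob h0 h1).measure_univ)]
    have := bern_not01 ρ
    simp only [not_or] at this ⊢
    simp [this]
  simp only [not_or] at this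
  simp only [not_or]
  simp [this]

lemma measurable_kernel (n r : ℕ) (ρ q₀ q₁ : ℝ) (h0 : 0 ≤ ρ) (h1 : ρ ≤ 1) :
    AEMeasurable (fun θ : Fin n → ℝ =>
      (Measure.pi fun e : HEdge n r =>
        bern (q₀ + (q₁ - q₀) * ∏ i ∈ e.1, θ i)).map fun y => (θ, y))
      (Measure.pi fun _ : Fin n => bern ρ) := by
  classical
  set f : (Fin n → ℝ) → Measure ((Fin n → ℝ) × (HEdge n r → ℝ)) :=
    fun θ => (Measure.pi fun e : HEdge n r =>
      bern (q₀ + (q₁ - q₀) * ∏ i ∈ e.1, θ i)).map fun y => (θ, y) with hf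
  let g : (Fin n → Bool) → Measure ((Fin n → ℝ) × (HEdge n r → ℝ)) :=
    fun b => f (fun i => if b i then (1:ℝ) else 0)
  let tb : (Fin n → ℝ) → (Fin n → Bool) := fun θ i => if θ i = 1 then true else false
  have hg : Measurable g := measurable_of_countable g
  have htb : Measurable tb := by
    apply measurable_pi_lambda
    intro i
    apply measurable_to_countable'
    intro x
    have hm1 : MeasurableSet {θ : Fin n → ℝ | θ i = 1} :=
      measurableSet_eq_fun (measurable_pi_apply i) measurable_const
    cases x
    · have : (fun θ : Fin n → ℝ => if θ i = 1 then true else false) ⁻¹' {false} =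
          {θ : Fin n → ℝ | θ i = 1}ᶜ := by
        ext θ; by_cases h : θ i = 1 <;> simp [h]
      exact this ▸ hm1.compl
    · have : (fun θ : Fin n → ℝ => if θ i = 1 then true else false) ⁻¹' {true} =
          {θ : Fin n → ℝ | θ i = 1} := by
        ext θ; by_cases h : θ i = 1 <;> simp [h]
      exact this ▸ hm1
  refine ⟨g ∘ tb, hg.comp htb, ?_⟩
  filter_upwards [ae_good h0 h1] with θ hθ
  have hθ' : (fun i => if tb θ i then (1:ℝ) else 0) = θ := by
    funext i
    rcases hθ i with h | h <;> simp [tb, h]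
  show f θ = g (tb θ)
  show f θ = f (fun i => if tb θ i then (1:ℝ) else 0)
  rw [hθ']



lemma bind_congr' {α β : Type*} [MeasurableSpace α] [MeasurableSpace β] {m : Measure α}
    {f g : α → Measure β} (h : f =ᵐ[m] g) : m.bind f = m.bind g := by
  rw [Measure.bind, Measure.bind, Measure.map_congr h]

lemma measurableSet_cyl (n r : ℕ) (B : Finset (Fin n)) (c : Fin n → ℝ)
    (F : Finset (HEdge n r)) :
    MeasurableSet {ω : (Fin n → ℝ) × (HEdge n r → ℝ) |
      (∀ i ∈ B, ω.1 i = c i) ∧ ∀ e ∈ F, ω.2 e = 1} := by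
  have h1 : MeasurableSet {ω : (Fin n → ℝ) × (HEdge n r → ℝ) | ∀ i ∈ B, ω.1 i = c i} := by
    have : {ω : (Fin n → ℝ) × (HEdge n r → ℝ) | ∀ i ∈ B, ω.1 i = c i} =
        ⋂ i ∈ B, {ω : (Fin n → ℝ) × (HEdge n r → ℝ) | ω.1 i = c i} := by
      ext ω; simp
    rw [this]
    refine MeasurableSet.biInter (B : Set (Fin n)).to_countable fun i _ => ?_
    exact measurableSet_eq_fun (measurable_fst.eval) measurable_const
  have h2 : MeasurableSet {ω : (Fin n → ℝ) × (HEdge n r → ℝ) | ∀ e ∈ F, ω.2 e = 1} := by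
    have : {ω : (Fin n → ℝ) × (HEdge n r → ℝ) | ∀ e ∈ F, ω.2 e = 1} =
        ⋂ e ∈ F, {ω : (Fin n → ℝ) × (HEdge n r → ℝ) | ω.2 e = 1} := by
      ext ω; simp
    rw [this]
    refine MeasurableSet.biInter (F : Set (HEdge n r)).to_countable fun e _ => ?_
    exact measurableSet_eq_fun (measurable_snd.eval) measurable_const
  exact h1.inter h2

lemma pds_apply (n r : ℕ) (ρ q₀ q₁ : ℝ) (h0 : 0 ≤ ρ) (h1 : ρ ≤ 1)
    (hq0 : 0 ≤ q₀) (hq01 : q₀ ≤ q₁) (hq1 : q₁ ≤ 1)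
    (B : Finset (Fin n)) (c : Fin n → ℝ) (hc : ∀ i ∈ B, c i = 0 ∨ c i = 1)
    (F : Finset (HEdge n r)) (hFB : ∀ e ∈ F, ∀ i ∈ e.1, i ∈ B ∧ c i = 1) :
    pds n r ρ q₀ q₁ {ω : (Fin n → ℝ) × (HEdge n r → ℝ) |
        (∀ i ∈ B, ω.1 i = c i) ∧ ∀ e ∈ F, ω.2 e = 1} =
      (∏ i ∈ B, if c i = 1 then ENNReal.ofReal ρ else ENNReal.ofReal (1 - ρ)) *
        ENNReal.ofReal q₁ ^ F.card := by
  classical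
  set S := {ω : (Fin n → ℝ) × (HEdge n r → ℝ) |
    (∀ i ∈ B, ω.1 i = c i) ∧ ∀ e ∈ F, ω.2 e = 1} with hS
  have hSm : MeasurableSet S := measurableSet_cyl n r B c F
  have hker := measurable_kernel n r ρ q₀ q₁ h0 h1
  rw [pds, bind_congr' hker.ae_eq_mk, Measure.bind_apply hSm hker.measurable_mk.aemeasurable]
  have key : ∀ θ : Fin n → ℝ, θ ∈ Good n →
      (Measure.pi fun e : HEdge n r =>
          bern (q₀ + (q₁ - q₀) * ∏ i ∈ e.1, θ i)).map (fun y => (θ, y)) S =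
      Set.indicator {θ : Fin n → ℝ | ∀ i ∈ B, θ i = c i}
        (fun _ => ENNReal.ofReal q₁ ^ F.card) θ := by
    intro θ hθ
    rw [Measure.map_apply measurable_prodMk_left hSm]
    by_cases hθB : ∀ i ∈ B, θ i = c i
    · have hpre : (Prod.mk θ) ⁻¹' S = {y : HEdge n r → ℝ | ∀ e ∈ F, y e ∈ ({1} : Set ℝ)} := by
        ext y
        simp only [Set.mem_preimage, Set.mem_setOf_eq, Set.mem_singleton_iff, hS]
        tauto
      rw [hpre]
      have hprob : ∀ e : HEdge n r,
          (bern (q₀ + (q₁ - q₀) * ∏ i ∈ e.1, θ i)) Set.univ = 1 := by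
        intro e
        rcases prod01 e.1 θ (fun i _ => hθ i) with hp | hp
        · rw [hp]
          have h' : q₀ + (q₁ - q₀) * 0 = q₀ := by ring
          rw [h']
          exact (bern_prob hq0 (le_trans hq01 hq1)).measure_univ
        · rw [hp]
          have h' : q₀ + (q₁ - q₀) * 1 = q₁ := by ring
          rw [h']
          exact (bern_prob (le_trans hq0 hq01) hq1).measure_univ
      rw [pi_cyl _ hprob]
      have : ∀ e ∈ F, (bern (q₀ + (q₁ - q₀) * ∏ i ∈ e.1, θ i)) {1} = ENNReal.ofReal q₁ := by
        intro e he
        have hprod : (∏ i ∈ e.1, θ i) = 1 := by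
          apply Finset.prod_eq_one
          intro i hi
          rcases hFB e he i hi with ⟨hiB, hci⟩
          rw [hθB i hiB, hci]
        rw [hprod]
        have : q₀ + (q₁ - q₀) * 1 = q₁ := by ring
        rw [this, bern_one]
      rw [Finset.prod_congr rfl this, Finset.prod_const]
      rw [Set.indicator_of_mem (show θ ∈ {θ : Fin n → ℝ | ∀ i ∈ B, θ i = c i} from hθB)]
    · have hpre : (Prod.mk θ) ⁻¹' S = ∅ := by
        ext y
        simp only [Set.mem_preimage, hS, Set.mem_setOf_eq, Set.mem_empty_iff_false, iff_false,
          not_and]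
        intro hcon
        exact absurd hcon hθB
      rw [hpre,
        Set.indicator_of_notMem (show θ ∉ {θ : Fin n → ℝ | ∀ i ∈ B, θ i = c i} from hθB)]
      simp
  have hmcond : MeasurableSet {θ : Fin n → ℝ | ∀ i ∈ B, θ i = c i} := by
    have : {θ : Fin n → ℝ | ∀ i ∈ B, θ i = c i} = ⋂ i ∈ B, {θ : Fin n → ℝ | θ i = c i} := by
      ext θ; simp
    rw [this]
    exact MeasurableSet.biInter (B : Set (Fin n)).to_countable fun i _ =>
      measurableSet_eq_fun (measurable_pi_apply i) measurable_const
  have hint := lintegral_congr_ae (μ := Measure.pi fun _ : Fin n => bern ρ)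
    (f := fun θ => hker.mk _ θ S)
    (g := fun θ => Set.indicator {θ : Fin n → ℝ | ∀ i ∈ B, θ i = c i}
      (fun _ => ENNReal.ofReal q₁ ^ F.card) θ) ?_
  · rw [hint, lintegral_indicator_const hmcond]
    have hcondset : {θ : Fin n → ℝ | ∀ i ∈ B, θ i = c i} =
        {θ : Fin n → ℝ | ∀ i ∈ B, θ i ∈ ({c i} : Set ℝ)} := by
      ext θ; simp
    rw [hcondset, pi_cyl _ (fun _ => (bern_prob h0 h1).measure_univ)]
    rw [mul_comm]
    congr 1
    apply Finset.prod_congr rfl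
    intro i hi
    rcases hc i hi with hci | hci
    · rw [hci, bern_zero, if_neg (by norm_num)]
    · rw [hci, bern_one, if_pos rfl]
  · filter_upwards [ae_good h0 h1, hker.ae_eq_mk] with θ hθ hmk
    rw [← hmk]
    exact key θ hθ



/-- vertex set of a sub-hypergraph -/
def vset {n r : ℕ} (F : Finset (HEdge n r)) : Finset (Fin n) := F.biUnion fun e => e.1

noncomputable def epsS (r : ℕ) (ξ a δ : ℝ) : ℝ :=
  min (a^2*δ/(ξ+a*δ)) (a*δ) / (100*r)

lemma epsS_pos (r : ℕ) (hr : 2 ≤ r) {ξ a δ : ℝ} (hξ0 : 0 < ξ) (ha : 0 < a) (hδ0 : 0 < δ) :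
    0 < epsS r ξ a δ := by
  have hr0 : (0:ℝ) < r := by exact_mod_cast (by omega : 0 < r)
  unfold epsS
  exact div_pos (lt_min (by positivity) (by positivity)) (by positivity)

lemma exponent_bound (r : ℕ) (hr : 2 ≤ r) (ξ a δ : ℝ) (hξ0 : 0 < ξ) (ha : 0 < a)
    (hδ0 : 0 < δ) (k j m : ℕ) (hm1 : 1 ≤ m) (hrv : r ≤ k + j)
    (hbad : (ξ/a+δ) * ((k:ℝ)+(j:ℝ)) < (m:ℝ)) :
    ξ*((k:ℝ)+(j:ℝ)) + 2 * epsS r ξ a δ * (r:ℝ) * (m:ℝ) - a*(m:ℝ) ≤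
      -(a^2*δ/(ξ+a*δ))/4 - a*δ := by
  have hr0 : (0:ℝ) < r := by
    have : (0:ℕ) < r := by omega
    exact_mod_cast this
  set v : ℝ := (k:ℝ) + (j:ℝ) with hv
  set s : ℝ := ξ + a*δ with hsdef
  have hs0 : 0 < s := by positivity
  set κ : ℝ := a^2*δ/s with hκdef
  have hκ0 : 0 < κ := by positivity
  set mn : ℝ := min κ (a*δ) with hmndef
  have hmn0 : 0 < mn := lt_min hκ0 (by positivity)
  have hm1' : (1:ℝ) ≤ (m:ℝ) := by exact_mod_cast hm1
  have hv2 : (2:ℝ) ≤ v := by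
    have : (2:ℕ) ≤ k + j := le_trans hr hrv
    have h2 : ((2:ℕ):ℝ) ≤ ((k+j:ℕ):ℝ) := by exact_mod_cast this
    push_cast at h2
    linarith
  have hv0 : 0 ≤ v := by linarith
  have hsv : s * v < a * (m:ℝ) := by
    have h := mul_lt_mul_of_pos_left hbad ha
    have hexp : a * (ξ/a+δ) = s := by
      rw [hsdef, mul_add, mul_comm a (ξ/a), div_mul_cancel₀ _ ha.ne']
    calc s * v = a * (ξ/a+δ) * v := by rw [hexp]
    _ = a * ((ξ/a+δ) * v) := by ring
    _ < a * (m:ℝ) := h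
  have h1 : κ * (m:ℝ) ≤ a*(m:ℝ) - ξ*v := by
    rw [hκdef, div_mul_eq_mul_div, div_le_iff₀ hs0]
    have hξsv : ξ * (s*v) ≤ ξ * (a*(m:ℝ)) := mul_le_mul_of_nonneg_left hsv.le hξ0.le
    rw [hsdef] at hξsv ⊢
    nlinarith [hξsv]
  have h2 : a*δ*v ≤ a*(m:ℝ) - ξ*v := by
    have hexp : s * v = ξ*v + a*δ*v := by rw [hsdef]; ring
    linarith
  have hεval : 2 * epsS r ξ a δ * (r:ℝ) * (m:ℝ) = mn * (m:ℝ) / 50 := by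
    rw [epsS, ← hsdef, ← hκdef, ← hmndef]
    field_simp
    ring
  rw [hεval]
  have hmnm : mn * (m:ℝ) ≤ κ * (m:ℝ) :=
    mul_le_mul_of_nonneg_right (min_le_left _ _) (by positivity)
  have hgoal : -(a^2*δ/(ξ+a*δ))/4 - a*δ = -κ/4 - a*δ := by rw [hκdef, hsdef]
  rw [hgoal]
  nlinarith [mul_nonneg hκ0.le (sub_nonneg.2 hm1'),
    mul_nonneg (mul_nonneg ha.le hδ0.le) (sub_nonneg.2 hv2)]



lemma term_bound (r : ℕ) (hr : 2 ≤ r) (ξ a δ : ℝ) (hξ0 : 0 < ξ) (ha : 0 < a) (hδ0 : 0 < δ)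
    (n D k j m : ℕ) (Acard : ℕ) (hn2 : 2 ≤ n)
    (hnr : (r:ℝ) ≤ (n:ℝ) ^ epsS r ξ a δ)
    (hD : (D:ℝ) ≤ (n:ℝ) ^ epsS r ξ a δ)
    (hA : (Acard:ℝ) ≤ (n:ℝ) ^ ξ)
    (hm1 : 1 ≤ m) (hmD : m ≤ D) (hrv : r ≤ k + j) (hvm : k + j ≤ r * m)
    (hbad : (ξ/a+δ) * ((k:ℝ)+(j:ℝ)) < (m:ℝ)) :
    ((n.choose k : ℝ) * (Acard.choose j : ℝ) * ((((k+j)^r)^m : ℕ) : ℝ)) *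
      (((n:ℝ)^(ξ-1))^k * ((n:ℝ)^(-a))^m) ≤
      (n:ℝ) ^ (-(a^2*δ/(ξ+a*δ))/4 - a*δ) := by
  have hx0 : (0:ℝ) < (n:ℝ) := by exact_mod_cast (by omega : 0 < n)
  have hx1 : (1:ℝ) ≤ (n:ℝ) := by exact_mod_cast (by omega : 1 ≤ n)
  set x := (n:ℝ) with hxdef
  set ε := epsS r ξ a δ with hεdef
  have hε0 : 0 < ε := epsS_pos r hr hξ0 ha hδ0
  have h1 : (n.choose k : ℝ) ≤ x ^ ((k:ℕ):ℝ) := by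
    rw [Real.rpow_natCast, hxdef]
    exact_mod_cast Nat.choose_le_pow n k
  have h2 : (Acard.choose j : ℝ) ≤ x ^ (ξ*(j:ℝ)) := by
    calc (Acard.choose j:ℝ) ≤ ((Acard:ℝ))^j := by
          exact_mod_cast Nat.choose_le_pow Acard j
    _ ≤ (x^ξ)^j := pow_le_pow_left₀ (Nat.cast_nonneg _) hA j
    _ = x ^ (ξ*(j:ℝ)) := by
        rw [← Real.rpow_natCast (x^ξ) j, ← Real.rpow_mul hx0.le]
  have hmε : (m:ℝ) ≤ x ^ ε := le_trans (by exact_mod_cast hmD) hD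
  have h3 : ((((k+j)^r)^m : ℕ):ℝ) ≤ x ^ (2*ε*(r:ℝ)*(m:ℝ)) := by
    have hkj : ((k+j : ℕ):ℝ) ≤ x ^ (2*ε) := by
      calc ((k+j:ℕ):ℝ) ≤ ((r*m : ℕ):ℝ) := by exact_mod_cast hvm
      _ = (r:ℝ)*(m:ℝ) := by push_cast; ring
      _ ≤ x^ε * x^ε := by
          apply mul_le_mul hnr hmε (Nat.cast_nonneg m)
          positivity
      _ = x ^ (2*ε) := by
          rw [← Real.rpow_add hx0]
          ring_nf
    calc ((((k+j)^r)^m : ℕ):ℝ) = (((k+j:ℕ):ℝ))^(r*m) := by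
          push_cast [← pow_mul]
          ring
    _ ≤ (x^(2*ε))^(r*m) := pow_le_pow_left₀ (Nat.cast_nonneg _) hkj _
    _ = x ^ (2*ε*(r:ℝ)*(m:ℝ)) := by
        rw [← Real.rpow_natCast (x^(2*ε)) (r*m), ← Real.rpow_mul hx0.le]
        push_cast
        ring_nf
  have h4 : ((x^(ξ-1))^k : ℝ) = x ^ ((ξ-1)*(k:ℝ)) := by
    rw [← Real.rpow_natCast (x^(ξ-1)) k, ← Real.rpow_mul hx0.le]
  have h5 : ((x^(-a))^m : ℝ) = x ^ (-(a*(m:ℝ))) := by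
    rw [← Real.rpow_natCast (x^(-a)) m, ← Real.rpow_mul hx0.le]
    ring_nf
  calc ((n.choose k : ℝ) * (Acard.choose j : ℝ) * ((((k+j)^r)^m : ℕ) : ℝ)) *
      (((n:ℝ)^(ξ-1))^k * ((n:ℝ)^(-a))^m)
      ≤ (x ^ ((k:ℕ):ℝ) * (x ^ (ξ*(j:ℝ))) * (x ^ (2*ε*(r:ℝ)*(m:ℝ)))) *
        (x ^ ((ξ-1)*(k:ℝ)) * x ^ (-(a*(m:ℝ)))) := by
        rw [← hxdef, h4, h5]
        have c1 : (0:ℝ) ≤ (n.choose k : ℝ) := Nat.cast_nonneg _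
        have c2 : (0:ℝ) ≤ (Acard.choose j : ℝ) := Nat.cast_nonneg _
        have c3 : (0:ℝ) ≤ ((((k+j)^r)^m : ℕ) : ℝ) := Nat.cast_nonneg _
        have c4 : (0:ℝ) ≤ x ^ ((ξ-1)*(k:ℝ)) * x ^ (-(a*(m:ℝ))) := by positivity
        gcongr
  _ = x ^ (((k:ℕ):ℝ) + ξ*(j:ℝ) + 2*ε*(r:ℝ)*(m:ℝ) + ((ξ-1)*(k:ℝ) + -(a*(m:ℝ)))) := by
        rw [Real.rpow_add hx0, Real.rpow_add hx0, Real.rpow_add hx0, Real.rpow_add hx0]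
  _ = x ^ (ξ*((k:ℝ)+(j:ℝ)) + 2 * ε * (r:ℝ) * (m:ℝ) - a*(m:ℝ)) := by
        congr 1
        push_cast
        ring
  _ ≤ x ^ (-(a^2*δ/(ξ+a*δ))/4 - a*δ) :=
        Real.rpow_le_rpow_of_exponent_le hx1
          (exponent_bound r hr ξ a δ hξ0 ha hδ0 k j m hm1 hrv hbad)



lemma fiber_card_le (n r : ℕ) (A : Finset (Fin n)) (s : Finset (Finset (HEdge n r)))
    (k j m : ℕ)
    (hs : ∀ F ∈ s, (vset F \ A).card = k ∧ (vset F ∩ A).card = j ∧ F.card = m) :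
    s.card ≤ n.choose k * A.card.choose j * ((k + j) ^ r) ^ m := by
  classical
  have hsub : s ⊆ ((Finset.univ : Finset (Fin n)).powersetCard k ×ˢ A.powersetCard j).biUnion
      (fun KJ => s.filter fun F => vset F \ A = KJ.1 ∧ vset F ∩ A = KJ.2) := by
    intro F hF
    obtain ⟨hk, hj, hm⟩ := hs F hF
    refine Finset.mem_biUnion.2 ⟨(vset F \ A, vset F ∩ A), ?_, ?_⟩
    · exact Finset.mem_product.2 ⟨Finset.mem_powersetCard.2 ⟨Finset.subset_univ _, hk⟩,
        Finset.mem_powersetCard.2 ⟨Finset.inter_subset_right, hj⟩⟩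
    · exact Finset.mem_filter.2 ⟨hF, rfl, rfl⟩
  refine le_trans (Finset.card_le_card hsub) (le_trans Finset.card_biUnion_le ?_)
  refine le_trans (Finset.sum_le_card_nsmul _ _ (((k+j)^r)^m) ?_) ?_
  · intro KJ hKJ
    set W := KJ.1 ∪ KJ.2 with hWdef
    have hW : W.card ≤ k + j := by
      obtain ⟨h1, h2⟩ := Finset.mem_product.1 hKJ
      have hc := Finset.card_union_le KJ.1 KJ.2
      rw [(Finset.mem_powersetCard.1 h1).2, (Finset.mem_powersetCard.1 h2).2] at hc
      exact hc
    have hsub2 : s.filter (fun F => vset F \ A = KJ.1 ∧ vset F ∩ A = KJ.2) ⊆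
        (Finset.univ.filter fun e : HEdge n r => e.1 ⊆ W).powersetCard m := by
      intro F hF
      obtain ⟨hFs, h1, h2⟩ := Finset.mem_filter.1 hF
      refine Finset.mem_powersetCard.2 ⟨?_, (hs F hFs).2.2⟩
      intro e he
      refine Finset.mem_filter.2 ⟨Finset.mem_univ _, ?_⟩
      have hsubV : e.1 ⊆ vset F := Finset.subset_biUnion_of_mem _ he
      have : vset F = W := by rw [hWdef, ← h1, ← h2, Finset.sdiff_union_inter]
      rw [← this]
      exact hsubV
    refine le_trans (Finset.card_le_card hsub2) ?_
    rw [Finset.card_powersetCard]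
    have hE : (Finset.univ.filter fun e : HEdge n r => e.1 ⊆ W).card ≤ (k+j)^r := by
      have hinj : (Finset.univ.filter fun e : HEdge n r => e.1 ⊆ W).card ≤
          (W.powersetCard r).card := by
        apply Finset.card_le_card_of_injOn (fun e => e.1)
        · intro e he
          exact Finset.mem_powersetCard.2 ⟨(Finset.mem_filter.1 he).2, e.2⟩
        · intro e _ e' _ h
          exact Subtype.ext h
      rw [Finset.card_powersetCard] at hinj
      exact le_trans hinj (le_trans (Nat.choose_le_pow _ _) (Nat.pow_le_pow_left hW r))
    exact le_trans (Nat.choose_le_pow _ _) (Nat.pow_le_pow_left hE m)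
  · apply le_of_eq
    rw [Finset.card_product, Finset.card_powersetCard, Finset.card_powersetCard,
      Finset.card_univ, Fintype.card_fin, smul_eq_mul]



set_option maxHeartbeats 2000000 in
lemma counting (r : ℕ) (hr : 2 ≤ r) (ξ a δ : ℝ) (hξ0 : 0 < ξ) (ha : 0 < a) (hδ0 : 0 < δ)
    (n D : ℕ) (A : Finset (Fin n)) (hn2 : 2 ≤ n)
    (hnr : (r:ℝ) ≤ (n:ℝ) ^ epsS r ξ a δ)
    (hn16 : (16 * (r:ℝ)^2) ≤ (n:ℝ) ^ (min (a^2*δ/(ξ+a*δ)) (a*δ) / 8))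
    (hD : (D:ℝ) ≤ (n:ℝ) ^ epsS r ξ a δ)
    (hA : (A.card:ℝ) ≤ (n:ℝ)^ξ) :
    ∑ F ∈ Finset.univ.filter (fun F : Finset (HEdge n r) => F.card ≤ D ∧
        ¬((F.card:ℝ) ≤ (ξ/a+δ) * (((vset F).card:ℕ):ℝ))),
      ((n:ℝ)^(ξ-1)) ^ (vset F \ A).card * ((n:ℝ)^(-a)) ^ F.card
      ≤ 1/2 * (n:ℝ)^(-(a*δ)/2) := by
  classical
  have hx0 : (0:ℝ) < (n:ℝ) := by exact_mod_cast (by omega : 0 < n)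
  have hx1 : (1:ℝ) ≤ (n:ℝ) := by exact_mod_cast (by omega : 1 ≤ n)
  set ε := epsS r ξ a δ with hεdef
  have hε0 : 0 < ε := epsS_pos r hr hξ0 ha hδ0
  have hone : (1:ℝ) ≤ (n:ℝ)^ε := by
    have := Real.rpow_le_rpow_of_exponent_le hx1 hε0.le
    rwa [Real.rpow_zero] at this
  set bad := Finset.univ.filter (fun F : Finset (HEdge n r) => F.card ≤ D ∧
      ¬((F.card:ℝ) ≤ (ξ/a+δ) * (((vset F).card:ℕ):ℝ))) with hbaddef
  set ψ : Finset (HEdge n r) → ℕ × ℕ × ℕ :=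
    fun F => ((vset F \ A).card, (vset F ∩ A).card, F.card) with hψdef
  have hfacts : ∀ y ∈ bad.image ψ, 1 ≤ y.2.2 ∧ y.2.2 ≤ D ∧ r ≤ y.1 + y.2.1 ∧
      y.1 + y.2.1 ≤ r * y.2.2 ∧ (ξ/a+δ) * ((y.1:ℝ)+(y.2.1:ℝ)) < (y.2.2:ℝ) := by
    intro y hy
    obtain ⟨F, hF, rfl⟩ := Finset.mem_image.1 hy
    obtain ⟨-, hcard, hnot⟩ := Finset.mem_filter.1 hF
    have hkj : (vset F \ A).card + (vset F ∩ A).card = (vset F).card :=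
      Finset.card_sdiff_add_card_inter _ _
    have hFne : F.Nonempty := by
      rcases Finset.eq_empty_or_nonempty F with h | h
      · exfalso
        apply hnot
        rw [h]
        simp only [Finset.card_empty, Nat.cast_zero, vset, Finset.biUnion_empty]
        norm_num
      · exact h
    have hm1 : 1 ≤ F.card := Finset.card_pos.2 hFne
    have hrv : r ≤ (vset F).card := by
      obtain ⟨e, he⟩ := hFne
      calc r = e.1.card := e.2.symm
      _ ≤ (vset F).card := Finset.card_le_card (Finset.subset_biUnion_of_mem _ he)
    have hvm : (vset F).card ≤ r * F.card := by
      refine le_trans Finset.card_biUnion_le ?_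
      rw [Finset.sum_congr rfl (fun e _ => e.2), Finset.sum_const, smul_eq_mul, mul_comm]
    have hbadr : (ξ/a+δ) * (((vset F).card : ℕ):ℝ) < (F.card:ℝ) := not_le.1 hnot
    refine ⟨hm1, hcard, ?_, ?_, ?_⟩
    · show r ≤ (vset F \ A).card + (vset F ∩ A).card
      rw [hkj]; exact hrv
    · show (vset F \ A).card + (vset F ∩ A).card ≤ r * F.card
      rw [hkj]; exact hvm
    · show (ξ/a+δ) * (((vset F \ A).card:ℝ) + ((vset F ∩ A).card:ℝ)) < (F.card:ℝ)
      have : ((vset F \ A).card:ℝ) + ((vset F ∩ A).card:ℝ) = (((vset F).card : ℕ):ℝ) := by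
        exact_mod_cast congrArg (Nat.cast : ℕ → ℝ) hkj
      rw [this]
      exact hbadr
  rw [← Finset.sum_fiberwise_of_maps_to (fun F hF => Finset.mem_image_of_mem ψ hF)
    (fun F => ((n:ℝ)^(ξ-1)) ^ (vset F \ A).card * ((n:ℝ)^(-a)) ^ F.card)]
  have hM : ∀ y ∈ bad.image ψ,
      (∑ F ∈ bad.filter (fun F => ψ F = y),
        ((n:ℝ)^(ξ-1)) ^ (vset F \ A).card * ((n:ℝ)^(-a)) ^ F.card)
      ≤ (n:ℝ) ^ (-(a^2*δ/(ξ+a*δ))/4 - a*δ) := by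
    intro y hy
    obtain ⟨hm1, hmD, hrv, hvm, hbadr⟩ := hfacts y hy
    obtain ⟨k, j, m⟩ := y
    simp only at hm1 hmD hrv hvm hbadr
    have hconst : ∀ F ∈ bad.filter (fun F => ψ F = (k, j, m)),
        ((n:ℝ)^(ξ-1)) ^ (vset F \ A).card * ((n:ℝ)^(-a)) ^ F.card
        = ((n:ℝ)^(ξ-1)) ^ k * ((n:ℝ)^(-a)) ^ m := by
      intro F hF
      obtain ⟨-, hψF⟩ := Finset.mem_filter.1 hF
      have e1 : (vset F \ A).card = k := congrArg Prod.fst hψF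
      have e3 : F.card = m := congrArg (fun p => p.2.2) hψF
      rw [e1, e3]
    rw [Finset.sum_congr rfl hconst, Finset.sum_const, nsmul_eq_mul]
    have hcard := fiber_card_le n r A (bad.filter (fun F => ψ F = (k,j,m))) k j m
      (fun F hF => by
        have hψF := (Finset.mem_filter.1 hF).2
        exact ⟨congrArg Prod.fst hψF, congrArg (fun p => p.2.1) hψF,
          congrArg (fun p => p.2.2) hψF⟩)
    calc ((bad.filter (fun F => ψ F = (k,j,m))).card : ℝ) *
          (((n:ℝ)^(ξ-1)) ^ k * ((n:ℝ)^(-a)) ^ m)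
        ≤ ((n.choose k * A.card.choose j * ((k + j) ^ r) ^ m : ℕ) : ℝ) *
          (((n:ℝ)^(ξ-1)) ^ k * ((n:ℝ)^(-a)) ^ m) := by
          apply mul_le_mul_of_nonneg_right (by exact_mod_cast hcard) (by positivity)
    _ = ((n.choose k : ℝ) * (A.card.choose j : ℝ) * ((((k+j)^r)^m : ℕ) : ℝ)) *
          (((n:ℝ)^(ξ-1)) ^ k * ((n:ℝ)^(-a)) ^ m) := by push_cast; ring
    _ ≤ (n:ℝ) ^ (-(a^2*δ/(ξ+a*δ))/4 - a*δ) :=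
          term_bound r hr ξ a δ hξ0 ha hδ0 n D k j m A.card hn2 hnr hD hA
            hm1 hmD hrv hvm hbadr
  refine le_trans (Finset.sum_le_sum hM) ?_
  rw [Finset.sum_const, nsmul_eq_mul]
  have hcardT : (bad.image ψ).card ≤ (r*D+1) * ((r*D+1) * (D+1)) := by
    have hsub : bad.image ψ ⊆
        Finset.range (r*D+1) ×ˢ (Finset.range (r*D+1) ×ˢ Finset.range (D+1)) := by
      intro y hy
      obtain ⟨hm1, hmD, hrv, hvm, hbadr⟩ := hfacts y hy
      have hk : y.1 ≤ r * D := le_trans (le_trans (Nat.le_add_right _ _) hvm)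
        (Nat.mul_le_mul_left r hmD)
      have hj : y.2.1 ≤ r * D := le_trans (le_trans (Nat.le_add_left _ _) hvm)
        (Nat.mul_le_mul_left r hmD)
      exact Finset.mem_product.2 ⟨Finset.mem_range.2 (by omega),
        Finset.mem_product.2 ⟨Finset.mem_range.2 (by omega), Finset.mem_range.2 (by omega)⟩⟩
    refine le_trans (Finset.card_le_card hsub) (le_of_eq ?_)
    simp [Finset.card_product]
  have hrD1 : ((r*D+1 : ℕ) : ℝ) ≤ 2*(r:ℝ)*(n:ℝ)^ε := by
    push_cast
    have h1 : (r:ℝ)*(D:ℝ) ≤ (r:ℝ)*(n:ℝ)^ε :=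
      mul_le_mul_of_nonneg_left hD (Nat.cast_nonneg r)
    have h2 : (1:ℝ) ≤ (r:ℝ)*(n:ℝ)^ε := by
      have hr1 : (1:ℝ) ≤ (r:ℝ) := by exact_mod_cast (by omega : 1 ≤ r)
      calc (1:ℝ) = 1*1 := by norm_num
      _ ≤ (r:ℝ)*(n:ℝ)^ε := mul_le_mul hr1 hone (by norm_num) (by positivity)
    linarith
  have hD1 : ((D+1 : ℕ) : ℝ) ≤ 2*(n:ℝ)^ε := by
    push_cast
    linarith
  have hTb : ((bad.image ψ).card : ℝ) ≤
      (2*(r:ℝ)*(n:ℝ)^ε) * ((2*(r:ℝ)*(n:ℝ)^ε) * (2*(n:ℝ)^ε)) := by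
    calc ((bad.image ψ).card : ℝ) ≤ (((r*D+1) * ((r*D+1) * (D+1)) : ℕ) : ℝ) := by
          exact_mod_cast hcardT
    _ = ((r*D+1 : ℕ):ℝ) * (((r*D+1:ℕ):ℝ) * ((D+1:ℕ):ℝ)) := by push_cast; ring
    _ ≤ (2*(r:ℝ)*(n:ℝ)^ε) * ((2*(r:ℝ)*(n:ℝ)^ε) * (2*(n:ℝ)^ε)) := by
          apply mul_le_mul hrD1 ?_ (by positivity) (by positivity)
          apply mul_le_mul hrD1 hD1 (by positivity) (by positivity)
  calc ((bad.image ψ).card : ℝ) * (n:ℝ) ^ (-(a^2*δ/(ξ+a*δ))/4 - a*δ)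
      ≤ ((2*(r:ℝ)*(n:ℝ)^ε) * ((2*(r:ℝ)*(n:ℝ)^ε) * (2*(n:ℝ)^ε))) *
        (n:ℝ) ^ (-(a^2*δ/(ξ+a*δ))/4 - a*δ) :=
        mul_le_mul_of_nonneg_right hTb (by positivity)
  _ = 8*(r:ℝ)^2 * ((n:ℝ)^ε * ((n:ℝ)^ε * ((n:ℝ)^ε *
        (n:ℝ) ^ (-(a^2*δ/(ξ+a*δ))/4 - a*δ)))) := by ring
  _ = 8*(r:ℝ)^2 * (n:ℝ) ^ (ε + (ε + (ε + (-(a^2*δ/(ξ+a*δ))/4 - a*δ)))) := by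
        rw [← Real.rpow_add hx0, ← Real.rpow_add hx0, ← Real.rpow_add hx0]
  _ ≤ (1/2 * (n:ℝ) ^ (min (a^2*δ/(ξ+a*δ)) (a*δ) / 8)) *
        (n:ℝ) ^ (ε + (ε + (ε + (-(a^2*δ/(ξ+a*δ))/4 - a*δ)))) := by
        apply mul_le_mul_of_nonneg_right (by linarith) (by positivity)
  _ = 1/2 * (n:ℝ) ^ (min (a^2*δ/(ξ+a*δ)) (a*δ) / 8 +
        (ε + (ε + (ε + (-(a^2*δ/(ξ+a*δ))/4 - a*δ))))) := by
        rw [mul_assoc, ← Real.rpow_add hx0]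
  _ ≤ 1/2 * (n:ℝ)^(-(a*δ)/2) := by
        apply mul_le_mul_of_nonneg_left (Real.rpow_le_rpow_of_exponent_le hx1 ?_) (by norm_num)
        have hκ0 : 0 < a^2*δ/(ξ+a*δ) := by positivity
        have hmnκ : min (a^2*δ/(ξ+a*δ)) (a*δ) ≤ a^2*δ/(ξ+a*δ) := min_le_left _ _
        have hmn0 : 0 < min (a^2*δ/(ξ+a*δ)) (a*δ) := lt_min hκ0 (by positivity)
        have hεle : ε ≤ min (a^2*δ/(ξ+a*δ)) (a*δ) / 200 := by
          rw [hεdef, epsS]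
          apply div_le_div_of_nonneg_left hmn0.le (by norm_num)
          have : (2:ℝ) ≤ (r:ℝ) := by exact_mod_cast hr
          linarith
        have haδ : 0 < a*δ := by positivity
        linarith


lemma pds_prob (n r : ℕ) (ρ q₀ q₁ : ℝ) (h0 : 0 ≤ ρ) (h1 : ρ ≤ 1) (hq0 : 0 ≤ q₀)
    (hq01 : q₀ ≤ q₁) (hq1 : q₁ ≤ 1) : IsProbabilityMeasure (pds n r ρ q₀ q₁) := by
  constructor
  have hset : (Set.univ : Set ((Fin n → ℝ) × (HEdge n r → ℝ))) =
      {ω : (Fin n → ℝ) × (HEdge n r → ℝ) | (∀ i ∈ (∅ : Finset (Fin n)), ω.1 i = 0) ∧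
        ∀ e ∈ (∅ : Finset (HEdge n r)), ω.2 e = 1} := by
    ext ω; simp
  rw [hset, pds_apply n r ρ q₀ q₁ h0 h1 hq0 hq01 hq1 ∅ (fun _ => 0) (by simp) ∅ (by simp)]
  simp

lemma eF_eq (n r : ℕ) (F : Finset (HEdge n r)) :
    {ω : (Fin n → ℝ) × (HEdge n r → ℝ) | ∀ e ∈ F, (∀ i ∈ e.1, ω.1 i = 1) ∧ ω.2 e = 1} =
    {ω : (Fin n → ℝ) × (HEdge n r → ℝ) |
      (∀ i ∈ vset F, ω.1 i = (fun _ : Fin n => (1:ℝ)) i) ∧ ∀ e ∈ F, ω.2 e = 1} := by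
  ext ω
  simp only [Set.mem_setOf_eq, vset, Finset.mem_biUnion]
  constructor
  · intro h
    refine ⟨?_, fun e he => (h e he).2⟩
    rintro i ⟨e, he, hie⟩
    exact (h e he).1 i hie
  · rintro ⟨h1, h2⟩ e he
    exact ⟨fun i hie => h1 i ⟨e, he, hie⟩, h2 e he⟩

lemma eventually_le_rpow (c e : ℝ) (he : 0 < e) :
    ∀ᶠ n : ℕ in Filter.atTop, c ≤ (n:ℝ) ^ e := by
  have h : Filter.Tendsto (fun n : ℕ => ((n:ℝ)) ^ e) Filter.atTop Filter.atTop :=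
    (tendsto_rpow_atTop he).comp tendsto_natCast_atTop_atTop
  exact h.eventually_ge_atTop c



set_option maxHeartbeats 2000000

/-- Lemma 5.4: high-probability sparsity of the planted hypergraph.  In the planted
dense subhypergraph model with ρ = n^{ξ−1}, q₁ = n^{−a}, q₀ = n^{−b}, the event that
every subgraph with at most D edges of the planted hypergraph X is sparse
(|edges| ≤ (ξ/a+δ)·|vertices|) has conditional probability ≥ 1 − (1/2)n^{−aδ/2}
given any fixing of at most n^ξ coordinates of θ. -/
theorem planted_hypergraph_sparsity_event (r : ℕ) (hr : 2 ≤ r)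
    (ξ a b δ : ℝ) (hξ : ξ ∈ Set.Ioc (0 : ℝ) (1 / 2)) (ha : 0 < a) (hab : a < b)
    (hδ : δ ∈ Set.Ioo (0 : ℝ) 1) :
    ∃ ε : ℝ, 0 < ε ∧ ∀ᶠ n : ℕ in Filter.atTop, ∀ D : ℕ, (D : ℝ) ≤ (n : ℝ) ^ ε →
      ∀ (A : Finset (Fin n)) (σ : Fin n → ℝ),
        (A.card : ℝ) ≤ (n : ℝ) ^ ξ →
        (∀ i ∈ A, σ i = 0 ∨ σ i = 1) →
        1 - (1 / 2) * (n : ℝ) ^ (-(a * δ) / 2) ≤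
          ((ProbabilityTheory.cond
              (pds n r ((n : ℝ) ^ (ξ - 1)) ((n : ℝ) ^ (-b)) ((n : ℝ) ^ (-a)))
              {ω | ∀ i ∈ A, ω.1 i = σ i})
            {ω | ∀ F : Finset (HEdge n r), F.card ≤ D →
                (∀ e ∈ F, (∀ i ∈ e.1, ω.1 i = 1) ∧ ω.2 e = 1) →
                (F.card : ℝ) ≤ (ξ / a + δ) * ((F.biUnion fun e => e.1).card : ℝ)}).toReal := by

  classical
  obtain ⟨hξ0, hξ1⟩ := hξ
  obtain ⟨hδ0, hδ1⟩ := hδ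
  refine ⟨epsS r ξ a δ, epsS_pos r hr hξ0 ha hδ0, ?_⟩
  filter_upwards [Filter.eventually_ge_atTop 2,
    eventually_le_rpow (r:ℝ) _ (epsS_pos r hr hξ0 ha hδ0),
    eventually_le_rpow (16*(r:ℝ)^2) (min (a^2*δ/(ξ+a*δ)) (a*δ) / 8)
      (by positivity)] with n hn2 hnr hn16
  intro D hD A σ hA hσ
  have hx0 : (0:ℝ) < (n:ℝ) := by exact_mod_cast (by omega : 0 < n)
  have hx1 : (1:ℝ) < (n:ℝ) := by exact_mod_cast (by omega : 1 < n)
  set ρ : ℝ := (n:ℝ) ^ (ξ - 1) with hρdef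
  set q₀ : ℝ := (n:ℝ) ^ (-b) with hq₀def
  set q₁ : ℝ := (n:ℝ) ^ (-a) with hq₁def
  have hρ0 : 0 < ρ := Real.rpow_pos_of_pos hx0 _
  have hρ1 : ρ < 1 := Real.rpow_lt_one_of_one_lt_of_neg hx1 (by linarith)
  have hq₀0 : 0 < q₀ := Real.rpow_pos_of_pos hx0 _
  have hq₁0 : 0 < q₁ := Real.rpow_pos_of_pos hx0 _
  have hq01 : q₀ ≤ q₁ := Real.rpow_le_rpow_of_exponent_le hx1.le (by linarith)
  have hq₁1 : q₁ ≤ 1 := Real.rpow_le_one_of_one_le_of_nonpos hx1.le (by linarith)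
  set μ := pds n r ρ q₀ q₁ with hμdef
  haveI hPμ : IsProbabilityMeasure μ :=
    pds_prob n r ρ q₀ q₁ hρ0.le hρ1.le hq₀0.le hq01 hq₁1
  set s := {ω : (Fin n → ℝ) × (HEdge n r → ℝ) | ∀ i ∈ A, ω.1 i = σ i} with hsdef
  set t := {ω : (Fin n → ℝ) × (HEdge n r → ℝ) | ∀ F : Finset (HEdge n r), F.card ≤ D →
      (∀ e ∈ F, (∀ i ∈ e.1, ω.1 i = 1) ∧ ω.2 e = 1) →
      (F.card : ℝ) ≤ (ξ / a + δ) * ((F.biUnion fun e => e.1).card : ℝ)} with htdef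
  have hseq : s = {ω : (Fin n → ℝ) × (HEdge n r → ℝ) | (∀ i ∈ A, ω.1 i = σ i) ∧
      ∀ e ∈ (∅ : Finset (HEdge n r)), ω.2 e = 1} := by
    ext ω; simp [hsdef]
  have hsm : MeasurableSet s := by rw [hseq]; exact measurableSet_cyl n r A σ ∅
  have hμs : μ s = ∏ i ∈ A, (if σ i = 1 then ENNReal.ofReal ρ else ENNReal.ofReal (1-ρ)) := by
    rw [hseq, hμdef, pds_apply n r ρ q₀ q₁ hρ0.le hρ1.le hq₀0.le hq01 hq₁1 A σ hσ ∅ (by simp)]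
    simp
  have hμs0 : μ s ≠ 0 := by
    rw [hμs]
    apply Finset.prod_ne_zero_iff.2
    intro i _
    split_ifs
    · exact (ENNReal.ofReal_pos.2 hρ0).ne'
    · exact (ENNReal.ofReal_pos.2 (by linarith)).ne'
  -- measurability of t
  have htm : MeasurableSet t := by
    have ht2 : t = ⋂ F : Finset (HEdge n r), {ω : (Fin n → ℝ) × (HEdge n r → ℝ) |
        F.card ≤ D → (∀ e ∈ F, (∀ i ∈ e.1, ω.1 i = 1) ∧ ω.2 e = 1) →
        (F.card : ℝ) ≤ (ξ / a + δ) * ((F.biUnion fun e => e.1).card : ℝ)} := by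
      ext ω; simp [htdef]
    rw [ht2]
    apply MeasurableSet.iInter
    intro F
    by_cases h1 : F.card ≤ D
    · by_cases h2 : (F.card : ℝ) ≤ (ξ / a + δ) * ((F.biUnion fun e => e.1).card : ℝ)
      · have : {ω : (Fin n → ℝ) × (HEdge n r → ℝ) |
            F.card ≤ D → (∀ e ∈ F, (∀ i ∈ e.1, ω.1 i = 1) ∧ ω.2 e = 1) →
            (F.card : ℝ) ≤ (ξ / a + δ) * ((F.biUnion fun e => e.1).card : ℝ)} = Set.univ := by
          ext ω; simp [h2]
        rw [this]; exact MeasurableSet.univ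
      · have : {ω : (Fin n → ℝ) × (HEdge n r → ℝ) |
            F.card ≤ D → (∀ e ∈ F, (∀ i ∈ e.1, ω.1 i = 1) ∧ ω.2 e = 1) →
            (F.card : ℝ) ≤ (ξ / a + δ) * ((F.biUnion fun e => e.1).card : ℝ)} =
            {ω : (Fin n → ℝ) × (HEdge n r → ℝ) |
              ∀ e ∈ F, (∀ i ∈ e.1, ω.1 i = 1) ∧ ω.2 e = 1}ᶜ := by
          ext ω; simp [h1, h2]
        rw [this, eF_eq]
        exact (measurableSet_cyl n r (vset F) (fun _ => 1) F).compl
    · have : {ω : (Fin n → ℝ) × (HEdge n r → ℝ) |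
          F.card ≤ D → (∀ e ∈ F, (∀ i ∈ e.1, ω.1 i = 1) ∧ ω.2 e = 1) →
          (F.card : ℝ) ≤ (ξ / a + δ) * ((F.biUnion fun e => e.1).card : ℝ)} = Set.univ := by
        ext ω; simp [h1]
      rw [this]; exact MeasurableSet.univ
  -- the per-subgraph bound
  have hbound : ∀ F : Finset (HEdge n r),
      μ (s ∩ {ω : (Fin n → ℝ) × (HEdge n r → ℝ) |
        ∀ e ∈ F, (∀ i ∈ e.1, ω.1 i = 1) ∧ ω.2 e = 1}) ≤
      ENNReal.ofReal (ρ ^ (vset F \ A).card * q₁ ^ F.card) * μ s := by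
    intro F
    by_cases hcons : ∀ i ∈ vset F ∩ A, σ i = 1
    · set c' : Fin n → ℝ := fun i => if i ∈ A then σ i else 1 with hc'def
      have hseteq : s ∩ {ω : (Fin n → ℝ) × (HEdge n r → ℝ) |
          ∀ e ∈ F, (∀ i ∈ e.1, ω.1 i = 1) ∧ ω.2 e = 1} =
          {ω : (Fin n → ℝ) × (HEdge n r → ℝ) |
            (∀ i ∈ A ∪ vset F, ω.1 i = c' i) ∧ ∀ e ∈ F, ω.2 e = 1} := by
        ext ω
        simp only [Set.mem_inter_iff, Set.mem_setOf_eq, hsdef]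
        constructor
        · rintro ⟨hA', heF⟩
          refine ⟨?_, fun e he => (heF e he).2⟩
          intro i hi
          by_cases hiA : i ∈ A
          · simp only [hc'def]; simp only [if_pos hiA]; exact hA' i hiA
          · simp only [hc'def]; simp only [if_neg hiA]
            have hiV : i ∈ vset F := (Finset.mem_union.1 hi).resolve_left hiA
            obtain ⟨e, he, hie⟩ := Finset.mem_biUnion.1 hiV
            exact (heF e he).1 i hie
        · rintro ⟨hc'h, hY⟩
          constructor
          · intro i hiA
            have := hc'h i (Finset.mem_union_left _ hiA)
            simp only [hc'def] at this
            simpa [if_pos hiA] using this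
          · intro e he
            refine ⟨?_, hY e he⟩
            intro i hie
            have hiV : i ∈ vset F := Finset.mem_biUnion.2 ⟨e, he, hie⟩
            have := hc'h i (Finset.mem_union_right _ hiV)
            simp only [hc'def] at this
            by_cases hiA : i ∈ A
            · rw [this, if_pos hiA]
              exact hcons i (Finset.mem_inter.2 ⟨hiV, hiA⟩)
            · rw [this, if_neg hiA]
      rw [hseteq, hμdef, pds_apply n r ρ q₀ q₁ hρ0.le hρ1.le hq₀0.le hq01 hq₁1 (A ∪ vset F) c'
        (by
          intro i hi
          simp only [hc'def]
          split_ifs with hiA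
          · exact hσ i hiA
          · right; rfl)
        F
        (by
          intro e he i hie
          have hiV : i ∈ vset F := Finset.mem_biUnion.2 ⟨e, he, hie⟩
          refine ⟨Finset.mem_union_right _ hiV, ?_⟩
          simp only [hc'def]
          by_cases hiA : i ∈ A
          · simp only [if_pos hiA]
            exact hcons i (Finset.mem_inter.2 ⟨hiV, hiA⟩)
          · simp only [if_neg hiA])]
      -- now compute the product
      have hunion : A ∪ vset F = A ∪ (vset F \ A) := by
        rw [Finset.union_sdiff_self_eq_union]
      rw [hunion, Finset.prod_union Finset.disjoint_sdiff]
      have hprodA : (∏ i ∈ A, if c' i = 1 then ENNReal.ofReal ρ else ENNReal.ofReal (1-ρ)) =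
          ∏ i ∈ A, (if σ i = 1 then ENNReal.ofReal ρ else ENNReal.ofReal (1-ρ)) := by
        apply Finset.prod_congr rfl
        intro i hi
        simp only [hc'def]
        simp only [if_pos hi]
      have hprodV : (∏ i ∈ vset F \ A,
          if c' i = 1 then ENNReal.ofReal ρ else ENNReal.ofReal (1-ρ)) =
          ENNReal.ofReal ρ ^ (vset F \ A).card := by
        rw [Finset.prod_congr rfl (fun i hi => ?_), Finset.prod_const]
        have hiA : i ∉ A := (Finset.mem_sdiff.1 hi).2
        simp only [hc'def]
        simp only [if_neg hiA]
        norm_num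
      rw [hprodA, hprodV, hμs, ENNReal.ofReal_mul (by positivity),
        ENNReal.ofReal_pow hρ0.le, ENNReal.ofReal_pow hq₁0.le]
      apply le_of_eq
      ring
    · push_neg at hcons
      obtain ⟨i, hi, hne⟩ := hcons
      have : s ∩ {ω : (Fin n → ℝ) × (HEdge n r → ℝ) |
          ∀ e ∈ F, (∀ i ∈ e.1, ω.1 i = 1) ∧ ω.2 e = 1} = ∅ := by
        ext ω
        simp only [Set.mem_inter_iff, Set.mem_setOf_eq, Set.mem_empty_iff_false, iff_false,
          not_and, hsdef]
        intro hA' hcon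
        obtain ⟨hiV, hiA⟩ := Finset.mem_inter.1 hi
        obtain ⟨e, he, hie⟩ := Finset.mem_biUnion.1 hiV
        exact hne (by rw [← hA' i hiA, (hcon e he).1 i hie])
      rw [this]
      simp
  -- union bound over bad subgraphs
  set bad := Finset.univ.filter (fun F : Finset (HEdge n r) => F.card ≤ D ∧
      ¬((F.card:ℝ) ≤ (ξ/a+δ) * (((vset F).card:ℕ):ℝ))) with hbaddef
  have hsubset : s ∩ tᶜ ⊆ ⋃ F ∈ bad, (s ∩ {ω : (Fin n → ℝ) × (HEdge n r → ℝ) |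
      ∀ e ∈ F, (∀ i ∈ e.1, ω.1 i = 1) ∧ ω.2 e = 1}) := by
    rintro ω ⟨hωs, hωt⟩
    rw [htdef] at hωt
    simp only [Set.mem_compl_iff, Set.mem_setOf_eq] at hωt
    push_neg at hωt
    obtain ⟨F, hFD, heF, hnotQ⟩ := hωt
    refine Set.mem_iUnion₂.2 ⟨F, ?_, hωs, heF⟩
    rw [hbaddef]
    exact Finset.mem_filter.2 ⟨Finset.mem_univ _, hFD, not_le.2 hnotQ⟩
  haveI hcondP : IsProbabilityMeasure (ProbabilityTheory.cond μ s) :=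
    ProbabilityTheory.cond_isProbabilityMeasure hμs0
  have hcompl : ProbabilityTheory.cond μ s tᶜ ≤
      ENNReal.ofReal (1/2 * (n:ℝ)^(-(a*δ)/2)) := by
    rw [ProbabilityTheory.cond_apply hsm]
    calc (μ s)⁻¹ * μ (s ∩ tᶜ)
        ≤ (μ s)⁻¹ * ∑ F ∈ bad, μ (s ∩ {ω : (Fin n → ℝ) × (HEdge n r → ℝ) |
            ∀ e ∈ F, (∀ i ∈ e.1, ω.1 i = 1) ∧ ω.2 e = 1}) := by
          apply mul_le_mul_right
          exact le_trans (measure_mono hsubset) (measure_biUnion_finset_le _ _)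
    _ ≤ (μ s)⁻¹ * ∑ F ∈ bad,
          ENNReal.ofReal (ρ ^ (vset F \ A).card * q₁ ^ F.card) * μ s := by
          apply mul_le_mul_right
          exact Finset.sum_le_sum (fun F _ => hbound F)
    _ = (∑ F ∈ bad, ENNReal.ofReal (ρ ^ (vset F \ A).card * q₁ ^ F.card)) *
          (μ s * (μ s)⁻¹) := by
          rw [← Finset.sum_mul]
          ring
    _ = ∑ F ∈ bad, ENNReal.ofReal (ρ ^ (vset F \ A).card * q₁ ^ F.card) := by
          rw [ENNReal.mul_inv_cancel hμs0 (measure_ne_top μ s), mul_one]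
    _ = ENNReal.ofReal (∑ F ∈ bad, ρ ^ (vset F \ A).card * q₁ ^ F.card) := by
          rw [ENNReal.ofReal_sum_of_nonneg]
          intro F _
          positivity
    _ ≤ ENNReal.ofReal (1/2 * (n:ℝ)^(-(a*δ)/2)) := by
          apply ENNReal.ofReal_le_ofReal
          exact counting r hr ξ a δ hξ0 ha hδ0 n D A hn2 hnr hn16 hD hA
  have hsum := measure_add_measure_compl (μ := ProbabilityTheory.cond μ s) htm
  rw [measure_univ] at hsum
  have hne1 : ProbabilityTheory.cond μ s t ≠ ⊤ := measure_ne_top _ _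
  have hne2 : ProbabilityTheory.cond μ s tᶜ ≠ ⊤ := measure_ne_top _ _
  have htr := congrArg ENNReal.toReal hsum
  rw [ENNReal.toReal_add hne1 hne2, ENNReal.toReal_one] at htr
  have h3 : (ProbabilityTheory.cond μ s tᶜ).toReal ≤ 1/2 * (n:ℝ)^(-(a*δ)/2) :=
    ENNReal.toReal_le_of_le_ofReal (by positivity) hcompl
  linarith [htr, h3]
end

section
/- Bound on the component-recursion complexity function (Lemma 5.11): Fix an integer r ≥ 2. Let α be an r-uniform hypergraph with w(α) connected components, and for any hypergraph β let 𝒞_β denote the set of subgraphs of β that are unions of connected components of β. Let 𝓗 be the function on hypergraphs defined recursively by 𝓗(α) = 2 + 2·Σ_{β ∈ 𝒞_α, β ≠ α} 𝓗(β) (in particular 𝓗(α) = 2 when α is connected or empty). Then 𝓗(α) ≤ 2·w(α)!·3^{w(α)}. -/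
open scoped Classical

/-- β is a union of connected components of α: β ⊆ α and no edge of β shares a
vertex with an edge of α ∖ β. -/
def IsCompUnion {n r : ℕ} (α β : Finset {s : Finset (Fin n) // s.card = r}) : Prop :=
  β ⊆ α ∧ ∀ e ∈ β, ∀ e' ∈ α, e' ∉ β → Disjoint e.1 e'.1

/-- The number of connected components of the hypergraph α (components of the
relation on its edges generated by "sharing a vertex"). -/
noncomputable def numComponents {n r : ℕ}
    (α : Finset {s : Finset (Fin n) // s.card = r}) : ℕ :=
  Nat.card (Quot fun e e' : {x : {s : Finset (Fin n) // s.card = r} // x ∈ α} =>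
    ¬ Disjoint e.1.1 e'.1.1)

/-! A union of components β of α is determined by the set of components of α that it contains,
and w(β) is the size of that set, so the proper unions of components of α embed into the proper
subsets of its w = w(α) components, preserving the number of components. By strong induction on
w this gives 𝓗(α) ≤ 2 + 2 ∑_{k<w} C(w,k)·2·k!·3^k. Since C(w,k)·k! is the falling factorial
w^(k), the sum a_w = ∑_{k<w} w^(k)·3^k satisfies a_{w+1} = 3(w+1)·a_w + 1, and induction on w
gives 1 + 2a_w ≤ w!·3^w. -/

open Finset Nat

theorem Finset.sum_ssubsets_apply_card {ι M : Type*} [AddCommMonoid M] (f : ℕ → M)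
    (s : Finset ι) : ∑ t ∈ s.ssubsets, f #t = ∑ m ∈ range #s, (#s).choose m • f m := by
  trans ∑ m ∈ range #s, ∑ t ∈ s.ssubsets with #t = m, f #t
  · exact (sum_fiberwise_of_maps_to (fun t ht => mem_range.2 <|
      card_lt_card (mem_ssubsets.1 ht)) _).symm
  · refine sum_congr rfl fun m hm => ?_
    have hfiber : {t ∈ s.ssubsets | #t = m} = powersetCard m s := by
      ext t
      rw [mem_filter, mem_ssubsets, mem_powersetCard, ssubset_iff_subset_ne]
      constructor
      · rintro ⟨⟨hts, -⟩, rfl⟩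
        exact ⟨hts, rfl⟩
      · rintro ⟨hts, rfl⟩
        exact ⟨⟨hts, fun h => (mem_range.1 hm).ne (h ▸ rfl)⟩, rfl⟩
    rw [hfiber, ← card_powersetCard, ← sum_const]
    exact sum_congr rfl fun t ht => by rw [(mem_powersetCard.1 ht).2]

theorem one_add_two_mul_sum_descFactorial_mul_pow_le (w : ℕ) :
    1 + 2 * ∑ k ∈ range w, w.descFactorial k * 3 ^ k ≤ w ! * 3 ^ w := by
  induction w with
  | zero => simp
  | succ w ih =>
    have hrec : ∑ k ∈ range (w + 1), (w + 1).descFactorial k * 3 ^ k =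
        3 * (w + 1) * ∑ k ∈ range w, w.descFactorial k * 3 ^ k + 1 := by
      rw [sum_range_succ', mul_sum]
      simp only [succ_descFactorial_succ, descFactorial_zero, pow_succ, pow_zero, mul_one]
      exact congrArg (· + 1) (sum_congr rfl fun k _ => by ring)
    rw [hrec, factorial_succ, pow_succ]
    nlinarith

theorem two_add_two_mul_sum_choose_le (w : ℕ) :
    2 + 2 * ∑ k ∈ range w, (w.choose k : ℝ) * (2 * (k ! : ℕ) * 3 ^ k) ≤
      2 * (w ! : ℕ) * 3 ^ w := by
  have hsum : ∑ k ∈ range w, (w.choose k : ℝ) * (2 * (k ! : ℕ) * 3 ^ k) =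
      2 * ((∑ k ∈ range w, w.descFactorial k * 3 ^ k : ℕ) : ℝ) := by
    push_cast [mul_sum, descFactorial_eq_factorial_mul_choose]
    exact sum_congr rfl fun k _ => by ring
  have hbound : (1 : ℝ) + 2 * ((∑ k ∈ range w, w.descFactorial k * 3 ^ k : ℕ) : ℝ) ≤
      (w ! : ℕ) * 3 ^ w := by
    exact_mod_cast one_add_two_mul_sum_descFactorial_mul_pow_le w
  rw [hsum]
  linarith

variable {n r : ℕ}

abbrev Edge (n r : ℕ) := {s : Finset (Fin n) // s.card = r}

def Meets (α : Finset (Edge n r)) (e e' : α) : Prop := ¬Disjoint e.1.1 e'.1.1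

abbrev Components (α : Finset (Edge n r)) := Quot (Meets α)

noncomputable instance (α : Finset (Edge n r)) : Fintype (Components α) := Fintype.ofFinite _

theorem numComponents_eq_card (α : Finset (Edge n r)) :
    numComponents α = Fintype.card (Components α) :=
  Nat.card_eq_fintype_card (α := Components α)

def Components.map {α β : Finset (Edge n r)} (h : β ⊆ α) : Components β → Components α :=
  Quot.lift (fun e => Quot.mk _ ⟨e.1, h e.2⟩) fun _ _ he => Quot.sound he

noncomputable def componentsIn (α β : Finset (Edge n r)) : Finset (Components α) :=
  {q | ∃ e : α, Quot.mk _ e = q ∧ e.1 ∈ β}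

theorem isCompUnion_self (α : Finset (Edge n r)) : IsCompUnion α α :=
  ⟨subset_rfl, fun _ _ _ he' he'α => absurd he' he'α⟩

theorem componentsIn_self (α : Finset (Edge n r)) : componentsIn α α = univ := by
  ext ⟨e⟩
  simp only [componentsIn, mem_filter, mem_univ, true_and, iff_true]
  exact ⟨e, rfl, e.2⟩

namespace IsCompUnion

variable {α β β' : Finset (Edge n r)}

theorem mem_iff_of_eqvGen (hβ : IsCompUnion α β) {x y : α}
    (h : Relation.EqvGen (Meets α) x y) : x.1 ∈ β ↔ y.1 ∈ β := by
  induction h with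
  | rel x y hxy =>
    refine ⟨fun hx => ?_, fun hy => ?_⟩ <;> by_contra hnot
    · exact hxy (hβ.2 x hx y y.2 hnot)
    · exact hxy (hβ.2 y hy x x.2 hnot).symm
  | refl => rfl
  | symm _ _ _ ih => exact ih.symm
  | trans _ _ _ _ _ ih₁ ih₂ => exact ih₁.trans ih₂

theorem eqvGen_restrict (hβ : IsCompUnion α β) {x y : α}
    (h : Relation.EqvGen (Meets α) x y) (hx : x.1 ∈ β) (hy : y.1 ∈ β) :
    Relation.EqvGen (Meets β) ⟨x.1, hx⟩ ⟨y.1, hy⟩ := by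
  induction h with
  | rel x y hxy => exact .rel _ _ hxy
  | refl => exact .refl _
  | symm _ _ _ ih => exact (ih hy hx).symm
  | trans x z y hxz _ ih₁ ih₂ =>
    have hz : z.1 ∈ β := (hβ.mem_iff_of_eqvGen hxz).1 hx
    exact (ih₁ hx hz).trans _ _ _ (ih₂ hz hy)

theorem map_injective (hβ : IsCompUnion α β) : Function.Injective (Components.map hβ.1) := by
  rintro ⟨x⟩ ⟨y⟩ hxy
  exact Quot.eqvGen_sound (hβ.eqvGen_restrict (Quot.eqvGen_exact hxy) x.2 y.2)

theorem mk_mem_componentsIn (hβ : IsCompUnion α β) (e : α) :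
    Quot.mk _ e ∈ componentsIn α β ↔ e.1 ∈ β := by
  simp only [componentsIn, mem_filter, mem_univ, true_and]
  exact ⟨fun ⟨e', he', he'β⟩ => (hβ.mem_iff_of_eqvGen (Quot.eqvGen_exact he')).1 he'β,
    fun he => ⟨e, rfl, he⟩⟩

theorem image_map_eq_componentsIn (hβ : IsCompUnion α β) :
    univ.image (Components.map hβ.1) = componentsIn α β := by
  ext ⟨e⟩
  rw [hβ.mk_mem_componentsIn, mem_image]
  constructor
  · rintro ⟨⟨e'⟩, -, he'⟩
    exact (hβ.mem_iff_of_eqvGen (Quot.eqvGen_exact he')).1 e'.2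
  · exact fun he => ⟨Quot.mk _ ⟨e.1, he⟩, mem_univ _, rfl⟩

theorem numComponents_eq_card_componentsIn (hβ : IsCompUnion α β) :
    numComponents β = #(componentsIn α β) := by
  rw [← hβ.image_map_eq_componentsIn, card_image_of_injective _ hβ.map_injective,
    numComponents_eq_card, Finset.card_univ]

theorem componentsIn_inj (hβ : IsCompUnion α β) (hβ' : IsCompUnion α β') :
    componentsIn α β = componentsIn α β' ↔ β = β' := by
  refine ⟨fun h => ?_, congrArg _⟩
  ext e
  by_cases he : e ∈ α
  · rw [← hβ.mk_mem_componentsIn ⟨e, he⟩, ← hβ'.mk_mem_componentsIn ⟨e, he⟩, h]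
  · exact iff_of_false (fun h => he (hβ.1 h)) (fun h => he (hβ'.1 h))

theorem componentsIn_ssubset_univ (hβ : IsCompUnion α β) (hne : β ≠ α) :
    componentsIn α β ⊂ univ := by
  refine (subset_univ _).ssubset_of_ne fun h => hne ?_
  rwa [← componentsIn_self, hβ.componentsIn_inj (isCompUnion_self α)] at h

theorem numComponents_lt (hβ : IsCompUnion α β) (hne : β ≠ α) :
    numComponents β < numComponents α := by
  rw [hβ.numComponents_eq_card_componentsIn, numComponents_eq_card, ← Finset.card_univ]
  exact card_lt_card (hβ.componentsIn_ssubset_univ hne)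

end IsCompUnion

theorem sum_numComponents_le (α : Finset (Edge n r)) (f : ℕ → ℝ) (hf : ∀ k, 0 ≤ f k) :
    ∑ β ∈ (α.powerset.filter fun β => IsCompUnion α β).erase α, f (numComponents β) ≤
      ∑ k ∈ range (numComponents α), (numComponents α).choose k * f k := by
  set T := (α.powerset.filter fun β => IsCompUnion α β).erase α
  have hT : ∀ β ∈ T, IsCompUnion α β ∧ β ≠ α := fun β hβ => by
    rw [mem_erase, mem_filter] at hβ
    exact ⟨hβ.2.2, hβ.1⟩
  calc ∑ β ∈ T, f (numComponents β) = ∑ β ∈ T, f #(componentsIn α β) :=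
        sum_congr rfl fun β hβ => by rw [(hT β hβ).1.numComponents_eq_card_componentsIn]
    _ = ∑ S ∈ T.image (componentsIn α), f #S :=
        (sum_image (f := fun S => f #S) fun β hβ β' hβ' =>
          ((hT β hβ).1.componentsIn_inj (hT β' hβ').1).1).symm
    _ ≤ ∑ S ∈ (univ : Finset (Components α)).ssubsets, f #S := by
        refine sum_le_sum_of_subset_of_nonneg (fun S hS => ?_) fun _ _ _ => hf _
        obtain ⟨β, hβ, rfl⟩ := mem_image.1 hS
        exact mem_ssubsets.2 ((hT β hβ).1.componentsIn_ssubset_univ (hT β hβ).2)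
    _ = ∑ k ∈ range (numComponents α), (numComponents α).choose k * f k := by
        rw [sum_ssubsets_apply_card, Finset.card_univ, ← numComponents_eq_card]
        simp only [nsmul_eq_mul]

theorem complexity_function_bound_general (n r : ℕ)
    (H : Finset {s : Finset (Fin n) // s.card = r} → ℝ)
    (hH : ∀ α, H α =
      2 + 2 * ∑ β ∈ (α.powerset.filter fun β => IsCompUnion α β).erase α, H β) :
    ∀ α, H α ≤ 2 * (Nat.factorial (numComponents α)) * 3 ^ (numComponents α) := by
  intro α
  induction hw : numComponents α using Nat.strong_induction_on generalizing α with
  | _ w ih =>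
  rw [hH α]
  calc 2 + 2 * ∑ β ∈ (α.powerset.filter fun β => IsCompUnion α β).erase α, H β
      ≤ 2 + 2 * ∑ β ∈ (α.powerset.filter fun β => IsCompUnion α β).erase α,
          2 * ((numComponents β)! : ℕ) * (3 : ℝ) ^ numComponents β := by
        gcongr with β hβ
        obtain ⟨hne, -, hβ⟩ := by simpa only [mem_erase, mem_filter] using hβ
        exact ih _ (hw ▸ hβ.numComponents_lt hne) β rfl
    _ ≤ 2 + 2 * ∑ k ∈ range w, (w.choose k : ℝ) * (2 * (k ! : ℕ) * 3 ^ k) := by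
        gcongr
        exact hw ▸ sum_numComponents_le α (fun k => 2 * (k ! : ℕ) * (3 : ℝ) ^ k)
          fun k => by positivity
    _ ≤ 2 * (w ! : ℕ) * 3 ^ w := two_add_two_mul_sum_choose_le w

/-- Lemma 5.11: any function 𝓗 on r-uniform hypergraphs satisfying the recursion
𝓗(α) = 2 + 2·Σ_{β ∈ 𝒞_α, β ≠ α} 𝓗(β), where 𝒞_α is the set of unions of connected
components of α (including ∅ and α itself), satisfies 𝓗(α) ≤ 2·w(α)!·3^{w(α)}, with
w(α) the number of connected components of α. -/
theorem complexity_function_bound (n r : ℕ) (hr : 2 ≤ r)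
    (H : Finset {s : Finset (Fin n) // s.card = r} → ℝ)
    (hH : ∀ α, H α =
      2 + 2 * ∑ β ∈ (α.powerset.filter fun β => IsCompUnion α β).erase α, H β) :
    ∀ α, H α ≤ 2 * (Nat.factorial (numComponents α)) * 3 ^ (numComponents α) :=
  complexity_function_bound_general n r H hH
end

section
/- Vanishing of cumulants for non-good graphs in tensor PCA (Lemma 6.1): Fix integers r ≥ 2 and m ≥ 2, λ ≥ 0, and a probability distribution π on ℝ with mean 0 and all moments finite. Let θ ∈ ℝ^n have i.i.d. entries from π, set X = λ·θ^{⊗r} and x = ∏_{i=1}^m θ_i, and for each r-uniform multi-hypergraph α on [n] define the joint cumulant κ_α recursively by κ_α = E[x·X^α] − Σ_{0 ≤ β < α} binom(α,β)·E[X^{α−β}]·κ_β, where X^α = ∏_e X_e^{α_e}. Write ᾱ for the (non-uniform) multi-hypergraph obtained from α by adding the hyperedge {1,…,m}, and call α good if α = 0 or if ᾱ is connected and every vertex of ᾱ has degree at least 2. Then κ_α = 0 for every α that is not good. -/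
open MeasureTheory

/-- An r-uniform multi-hypergraph on [n]: a multiplicity for each size-r multiset
of vertices. -/
abbrev MHG (n r : ℕ) := Sym (Fin n) r → ℕ

/-- The multiset of edges (each a multiset of vertices) of a multi-hypergraph,
with multiplicity. -/
def edgesOf {n r : ℕ} (α : MHG n r) : Multiset (Multiset (Fin n)) :=
  ∑ e : Sym (Fin n) r, Multiset.replicate (α e) (e : Multiset (Fin n))

/-- The extra hyperedge {1,…,m} (vertices of index < m). -/
def barEdge (n m : ℕ) : Multiset (Fin n) :=
  (Finset.univ.filter fun i : Fin n => (i : ℕ) < m).val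

/-- ᾱ: the multi-hypergraph α together with the added hyperedge {1,…,m}. -/
def barGraph {n r : ℕ} (m : ℕ) (α : MHG n r) : Multiset (Multiset (Fin n)) :=
  barEdge n m ::ₘ edgesOf α

/-- Degree of vertex i in a multiset of edges, counted with multiplicity
(an edge contributes the number of occurrences of i in it). -/
def degM {n : ℕ} (G : Multiset (Multiset (Fin n))) (i : Fin n) : ℕ :=
  (G.map fun e => e.count i).sum

/-- A (general, not necessarily uniform) multi-hypergraph given as a multiset of
edges is connected: every pair of non-isolated vertices is joined by a chain of
pairwise-intersecting edges of G. -/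
def MHConnected {n : ℕ} (G : Multiset (Multiset (Fin n))) : Prop :=
  ∀ u v : Fin n, (∃ e ∈ G, u ∈ e) → (∃ e ∈ G, v ∈ e) →
    ∃ (p : ℕ) (c : Fin (p + 1) → Multiset (Fin n)),
      (∀ j, c j ∈ G) ∧ u ∈ c 0 ∧ v ∈ c (Fin.last p) ∧
      ∀ j : Fin p, ∃ w : Fin n, w ∈ c j.castSucc ∧ w ∈ c j.succ

/-- α is good: α = 0, or ᾱ is connected and every non-isolated vertex of ᾱ has
degree at least 2 (with multiplicity). -/
def GoodMHG {n r : ℕ} (m : ℕ) (α : MHG n r) : Prop :=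
  α = 0 ∨ (MHConnected (barGraph m α) ∧
    ∀ i : Fin n, 0 < degM (barGraph m α) i → 2 ≤ degM (barGraph m α) i)

/-- Number of edges of α, counted with multiplicity. -/
def edgeCount {n r : ℕ} (α : MHG n r) : ℕ := ∑ e, α e

/-- Number of non-isolated vertices of α. -/
def vertexCount {n r : ℕ} (α : MHG n r) : ℕ :=
  (Finset.univ.filter fun i : Fin n => 0 < degM (edgesOf α) i).card

/-- binom(α,β) = ∏_e binom(α_e, β_e). -/
def mhgChoose {n r : ℕ} (α β : MHG n r) : ℕ := ∏ e, Nat.choose (α e) (β e)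

/-- X^α = ∏_e X_e^{α_e} as a function of θ, where X_e = λ·∏_{i∈e} θ_i
(with multiplicity). -/
noncomputable def XPow {n r : ℕ} (lam : ℝ) (θ : Fin n → ℝ) (α : MHG n r) : ℝ :=
  ∏ e : Sym (Fin n) r, (lam * ((e : Multiset (Fin n)).map θ).prod) ^ α e

/-- The estimand x = ∏_{i=1}^m θ_i. -/
def xEst {n : ℕ} (m : ℕ) (hmn : m ≤ n) (θ : Fin n → ℝ) : ℝ :=
  ∏ i : Fin m, θ (Fin.castLE hmn i)

/-!
Independence of the coordinates of `θ` gives `E[x X^α] = λ^|α| ∏ᵢ μ(deg_ᾱ i)` and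
`E[X^α] = λ^|α| ∏ᵢ μ(deg_α i)`, where `μ t = ∫ y^t dπ`, and the recursion says
`E[x X^α] = ∑_{β ≤ α} binom(α,β) E[X^(α-β)] κ_β`; we argue by induction on `α`.
If a vertex `i` has degree one in `ᾱ`, then for each `β ≤ α` it has degree one either in `β̄`
(so `κ_β = 0`) or in `α - β` (so `E[X^(α-β)]` contains the factor `μ 1 = 0`); as
`E[x X^α]` also vanishes, so does `κ_α`.
Otherwise, if `α ≠ 0` is not good, `ᾱ` is disconnected. Let `S` be the vertex set of the component
of the added edge, and split `α = α₁ + α₂` into the edges inside `S` and those avoiding it.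
Moments factor along this split, so the only terms of the expansion of `E[x X^α]` that survive
the induction are `E[X^α₂]` times the expansion of `E[x X^α₁]`, and `κ_α`; since
`E[x X^α] = E[x X^α₁] E[X^α₂]`, this forces `κ_α = 0`.
-/

section Cumulant

open Finset

variable {ι : Type*}

theorem le_indicator_compl_iff {s : Set ι} {β γ : ι → ℕ} (hγ : γ ≤ β) :
    γ ≤ sᶜ.indicator β ↔ s.indicator γ = 0 := by
  refine ⟨fun hle => funext fun e => ?_, fun h0 e => ?_⟩ <;> by_cases he : e ∈ s
  · simpa [he] using hle e
  · simp [he]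
  · simpa [he] using congrFun h0 e
  · simpa [he] using hγ e

variable [Fintype ι] [DecidableEq ι]

def CumulantRecursion (M P κ : (ι → ℕ) → ℝ) : Prop :=
  ∀ α, κ α = M α - ∑ β ∈ (Iic α).erase α,
    ((∏ e, (α e).choose (β e) : ℕ) : ℝ) * P (α - β) * κ β

variable {M P κ : (ι → ℕ) → ℝ}

theorem CumulantRecursion.eq_sum_Iic (h : CumulantRecursion M P κ) (hP : P 0 = 1) (α : ι → ℕ) :
    M α = ∑ β ∈ Iic α, ((∏ e, (α e).choose (β e) : ℕ) : ℝ) * P (α - β) * κ β := by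
  rw [← add_sum_erase _ _ (mem_Iic.mpr le_rfl), h α]
  simp [hP]

theorem CumulantRecursion.eq_zero_of_vanishing (h : CumulantRecursion M P κ) (hP : P 0 = 1)
    (Z Y : (ι → ℕ) → Prop) (hMZ : ∀ γ, Z γ → M γ = 0) (hPY : ∀ γ, Y γ → P γ = 0)
    (hZY : ∀ γ β, β ≤ γ → Z γ → Z β ∨ Y (γ - β)) (α : ι → ℕ) (hα : Z α) : κ α = 0 := by
  induction α using WellFoundedLT.induction with
  | _ α ih =>
  have hsum := h.eq_sum_Iic hP α
  rw [hMZ α hα, ← add_sum_erase _ _ (mem_Iic.mpr le_rfl), sum_eq_zero fun β hβ => ?_] at hsum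
  · simpa [hP] using hsum.symm
  obtain ⟨hne, hle⟩ := mem_erase.mp hβ
  rcases hZY α β (mem_Iic.mp hle) hα with hZ | hY
  · rw [ih β (lt_of_le_of_ne (mem_Iic.mp hle) hne) hZ, mul_zero]
  · rw [hPY _ hY, mul_zero, zero_mul]

theorem CumulantRecursion.sum_Iic_indicator_compl (h : CumulantRecursion M P κ) (hP : P 0 = 1)
    (s : Set ι) {β : ι → ℕ} (hPs : ∀ γ ≤ β, P γ = P (sᶜ.indicator γ) * P (s.indicator γ)) :
    ∑ γ ∈ Iic (sᶜ.indicator β), ((∏ e, (β e).choose (γ e) : ℕ) : ℝ) * P (β - γ) * κ γ =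
      M (sᶜ.indicator β) * P (s.indicator β) := by
  rw [h.eq_sum_Iic hP, sum_mul]
  refine sum_congr rfl fun γ hγ => ?_
  have hγs : ∀ e ∈ s, γ e = 0 := fun e he => by simpa [he] using mem_Iic.mp hγ e
  have hchoose : ∏ e, (β e).choose (γ e) = ∏ e, (sᶜ.indicator β e).choose (γ e) :=
    prod_congr rfl fun e _ => by by_cases he : e ∈ s <;> simp [he, hγs]
  have hin : sᶜ.indicator (β - γ) = sᶜ.indicator β - γ := by
    ext e; by_cases he : e ∈ s <;> simp [he, hγs]
  have hout : s.indicator (β - γ) = s.indicator β := by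
    ext e; by_cases he : e ∈ s <;> simp [he, hγs]
  rw [hchoose, hPs _ tsub_le_self, hin, hout]
  ring

theorem CumulantRecursion.eq_zero_of_factor (h : CumulantRecursion M P κ) (hP : P 0 = 1)
    (s : Set ι) {α : ι → ℕ}
    (hMs : ∀ γ ≤ α, M γ = M (sᶜ.indicator γ) * P (s.indicator γ))
    (hPs : ∀ γ ≤ α, P γ = P (sᶜ.indicator γ) * P (s.indicator γ)) :
    ∀ β ≤ α, s.indicator β ≠ 0 → κ β = 0 := by
  classical
  intro β
  induction β using WellFoundedLT.induction with
  | _ β ih =>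
  intro hβα hβs
  -- apart from `γ = β`, the terms with `¬ γ ≤ sᶜ.indicator β` vanish by induction
  have outer : ∑ γ ∈ Iic β with ¬ γ ≤ sᶜ.indicator β,
      ((∏ e, (β e).choose (γ e) : ℕ) : ℝ) * P (β - γ) * κ γ = κ β := by
    rw [sum_eq_single β]
    · simp [hP]
    · intro γ hγ hne
      obtain ⟨hγβ, hγβ₁⟩ := mem_filter.mp hγ
      have hγβ : γ ≤ β := mem_Iic.mp hγβ
      rw [ih γ (lt_of_le_of_ne hγβ hne) (hγβ.trans hβα)
        ((le_indicator_compl_iff hγβ).not.mp hγβ₁), mul_zero]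
    · intro hβ
      exact (hβ <| mem_filter.mpr
        ⟨mem_Iic.mpr le_rfl, (le_indicator_compl_iff le_rfl).not.mpr hβs⟩).elim
  have hfilter : (Iic β).filter (· ≤ sᶜ.indicator β) = Iic (sᶜ.indicator β) := by
    ext γ; simpa using fun h => h.trans (Set.indicator_le_self _ _)
  have key := h.eq_sum_Iic hP β
  rw [← sum_filter_add_sum_filter_not _ (· ≤ sᶜ.indicator β), hfilter,
    h.sum_Iic_indicator_compl hP s fun γ hγ => hPs γ (hγ.trans hβα), outer, hMs β hβα] at key
  linarith

end Cumulant

section Degree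

variable {n r : ℕ}

theorem degM_eq_count_sum (G : Multiset (Multiset (Fin n))) (i : Fin n) :
    degM G i = G.sum.count i :=
  (map_multiset_sum (Multiset.countAddMonoidHom i) G).symm

theorem degM_add (G H : Multiset (Multiset (Fin n))) : degM (G + H) = degM G + degM H := by
  ext i; simp [degM]

theorem degM_eq_zero_iff {G : Multiset (Multiset (Fin n))} {i : Fin n} :
    degM G i = 0 ↔ ∀ e ∈ G, i ∉ e := by
  simp [degM, Multiset.sum_eq_zero_iff]

theorem mem_edgesOf {α : MHG n r} {a : Multiset (Fin n)} :
    a ∈ edgesOf α ↔ ∃ e, α e ≠ 0 ∧ a = e := by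
  simp [edgesOf, Multiset.mem_sum, Multiset.mem_replicate]

theorem edgesOf_add (α β : MHG n r) : edgesOf (α + β) = edgesOf α + edgesOf β := by
  simp [edgesOf, Multiset.replicate_add, Finset.sum_add_distrib]

theorem edgeCount_add (α β : MHG n r) : edgeCount (α + β) = edgeCount α + edgeCount β := by
  simp [edgeCount, Finset.sum_add_distrib]

theorem degM_barGraph (m : ℕ) (α : MHG n r) (i : Fin n) :
    degM (barGraph m α) i = (barEdge n m).count i + degM (edgesOf α) i := by
  simp [barGraph, degM]

theorem degM_barGraph_add (m : ℕ) (α β : MHG n r) :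
    degM (barGraph m (α + β)) = degM (barGraph m α) + degM (edgesOf β) := by
  ext i; simp only [Pi.add_apply, degM_barGraph, edgesOf_add, degM_add, add_assoc]

theorem degM_edgesOf_eq_zero {α : MHG n r} {i : Fin n}
    (h : ∀ e, α e ≠ 0 → i ∉ (e : Multiset (Fin n))) : degM (edgesOf α) i = 0 :=
  degM_eq_zero_iff.mpr fun _ ha => by
    obtain ⟨e, he, rfl⟩ := mem_edgesOf.mp ha
    exact h e he

end Degree

section Moments

open MeasureTheory

variable {V : Type*} [Fintype V] (π : Measure ℝ)

noncomputable def momentWeight (d : V → ℕ) : ℝ := ∏ i, ∫ y, y ^ d i ∂π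

theorem integral_prod_pow [SigmaFinite π] (d : V → ℕ) :
    ∫ θ, ∏ i, θ i ^ d i ∂(Measure.pi fun _ : V => π) = momentWeight π d :=
  integral_fintype_prod_eq_prod fun i (y : ℝ) => y ^ d i

theorem momentWeight_eq_zero (hmean : ∫ y, y ∂π = 0) {d : V → ℕ} {i : V} (h : d i = 1) :
    momentWeight π d = 0 :=
  Finset.prod_eq_zero (Finset.mem_univ i) (by simpa [h] using hmean)

variable [IsProbabilityMeasure π]

theorem momentWeight_zero : momentWeight π (0 : V → ℕ) = 1 := by
  simp [momentWeight]

theorem momentWeight_add {d₁ d₂ : V → ℕ} (h : ∀ i, d₁ i = 0 ∨ d₂ i = 0) :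
    momentWeight π (d₁ + d₂) = momentWeight π d₁ * momentWeight π d₂ := by
  rw [momentWeight, momentWeight, momentWeight, ← Finset.prod_mul_distrib]
  refine Finset.prod_congr rfl fun i _ => ?_
  rcases h i with h | h <;> simp [h]

end Moments

section Monomials

variable {n r : ℕ}

theorem prod_map_eq_prod_pow_count (s : Multiset (Fin n)) (θ : Fin n → ℝ) :
    (s.map θ).prod = ∏ i, θ i ^ s.count i := by
  rw [Finset.prod_multiset_map_count]
  exact Finset.prod_subset (Finset.subset_univ _) fun i _ hi => by
    simp [Multiset.count_eq_zero_of_notMem (Multiset.mem_toFinset.not.mp hi)]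

theorem prod_map_prod_map_eq (G : Multiset (Multiset (Fin n))) (θ : Fin n → ℝ) :
    (G.map fun e => (e.map θ).prod).prod = ∏ i, θ i ^ degM G i := by
  simp_rw [degM_eq_count_sum, ← prod_map_eq_prod_pow_count]
  rw [← Multiset.join, Multiset.map_join, Multiset.prod_join, Multiset.map_map]
  rfl

theorem prod_map_edgesOf {M : Type*} [CommMonoid M] (f : Multiset (Fin n) → M) (α : MHG n r) :
    ((edgesOf α).map f).prod = ∏ e : Sym (Fin n) r, f e ^ α e := by
  rw [edgesOf, ← Multiset.coe_mapAddMonoidHom, map_sum, Multiset.prod_sum]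
  simp [Multiset.prod_replicate]

theorem XPow_eq (lam : ℝ) (θ : Fin n → ℝ) (α : MHG n r) :
    XPow lam θ α = lam ^ edgeCount α * ∏ i, θ i ^ degM (edgesOf α) i := by
  rw [XPow, ← prod_map_prod_map_eq, prod_map_edgesOf]
  simp_rw [mul_pow, Finset.prod_mul_distrib, Finset.prod_pow_eq_pow_sum, edgeCount]

theorem xEst_eq (m : ℕ) (hmn : m ≤ n) (θ : Fin n → ℝ) :
    xEst m hmn θ = ((barEdge n m).map θ).prod := by
  refine Finset.prod_bij' (fun (i : Fin m) _ => Fin.castLE hmn i)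
    (fun (i : Fin n) hi => ⟨(i : ℕ), by simpa using (Finset.mem_filter.mp hi).2⟩)
    ?_ ?_ ?_ ?_ ?_ <;> intros <;> simp_all

theorem xEst_mul_XPow_eq (m : ℕ) (hmn : m ≤ n) (lam : ℝ) (θ : Fin n → ℝ) (α : MHG n r) :
    xEst m hmn θ * XPow lam θ α = lam ^ edgeCount α * ∏ i, θ i ^ degM (barGraph m α) i := by
  rw [xEst_eq, XPow_eq, mul_left_comm, ← prod_map_prod_map_eq, ← prod_map_prod_map_eq, barGraph,
    Multiset.map_cons, Multiset.prod_cons]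

end Monomials

section Expectation

open MeasureTheory

variable {n r : ℕ} (π : Measure ℝ) [IsProbabilityMeasure π] (lam : ℝ)

theorem integral_XPow (γ : MHG n r) :
    ∫ θ, XPow lam θ γ ∂(Measure.pi fun _ => π) =
      lam ^ edgeCount γ * momentWeight π (degM (edgesOf γ)) := by
  simp_rw [XPow_eq, integral_const_mul, integral_prod_pow]

theorem integral_xEst_mul_XPow (m : ℕ) (hmn : m ≤ n) (γ : MHG n r) :
    ∫ θ, xEst m hmn θ * XPow lam θ γ ∂(Measure.pi fun _ => π) =
      lam ^ edgeCount γ * momentWeight π (degM (barGraph m γ)) := by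
  simp_rw [xEst_mul_XPow_eq, integral_const_mul, integral_prod_pow]

theorem integral_XPow_zero : ∫ θ, XPow lam θ (0 : MHG n r) ∂(Measure.pi fun _ => π) = 1 := by
  have : degM (edgesOf (0 : MHG n r)) = 0 := by ext i; simp [degM, edgesOf]
  simp [integral_XPow, edgeCount, this, momentWeight_zero]

theorem integral_XPow_add {γ δ : MHG n r}
    (h : ∀ i, degM (edgesOf γ) i = 0 ∨ degM (edgesOf δ) i = 0) :
    ∫ θ, XPow lam θ (γ + δ) ∂(Measure.pi fun _ => π) =
      (∫ θ, XPow lam θ γ ∂(Measure.pi fun _ => π)) *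
        ∫ θ, XPow lam θ δ ∂(Measure.pi fun _ => π) := by
  simp only [integral_XPow, edgeCount_add, edgesOf_add, degM_add, momentWeight_add π h]
  ring

theorem integral_xEst_mul_XPow_add (m : ℕ) (hmn : m ≤ n) {γ δ : MHG n r}
    (h : ∀ i, degM (barGraph m γ) i = 0 ∨ degM (edgesOf δ) i = 0) :
    ∫ θ, xEst m hmn θ * XPow lam θ (γ + δ) ∂(Measure.pi fun _ => π) =
      (∫ θ, xEst m hmn θ * XPow lam θ γ ∂(Measure.pi fun _ => π)) *
        ∫ θ, XPow lam θ δ ∂(Measure.pi fun _ => π) := by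
  simp only [integral_XPow, integral_xEst_mul_XPow, edgeCount_add, degM_barGraph_add,
    momentWeight_add π h]
  ring

variable {π}

theorem integral_XPow_eq_zero (hmean : ∫ y, y ∂π = 0) {γ : MHG n r} {i : Fin n}
    (h : degM (edgesOf γ) i = 1) :
    ∫ θ, XPow lam θ γ ∂(Measure.pi fun _ => π) = 0 := by
  rw [integral_XPow, momentWeight_eq_zero π hmean h, mul_zero]

theorem integral_xEst_mul_XPow_eq_zero (hmean : ∫ y, y ∂π = 0) (m : ℕ) (hmn : m ≤ n)
    {γ : MHG n r} {i : Fin n} (h : degM (barGraph m γ) i = 1) :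
    ∫ θ, xEst m hmn θ * XPow lam θ γ ∂(Measure.pi fun _ => π) = 0 := by
  rw [integral_xEst_mul_XPow, momentWeight_eq_zero π hmean h, mul_zero]

end Expectation

section Connectivity

variable {n : ℕ}

def SharesEdge (G : Multiset (Multiset (Fin n))) (u v : Fin n) : Prop :=
  ∃ e ∈ G, u ∈ e ∧ v ∈ e

instance (G : Multiset (Multiset (Fin n))) : Std.Symm (SharesEdge G) where
  symm _ _ := fun ⟨e, he, hu, hv⟩ => ⟨e, he, hv, hu⟩

theorem exists_chain_of_reflTransGen {G : Multiset (Multiset (Fin n))} {u v : Fin n}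
    (h : Relation.ReflTransGen (SharesEdge G) u v) (hu : ∃ e ∈ G, u ∈ e) :
    ∃ (p : ℕ) (c : Fin (p + 1) → Multiset (Fin n)),
      (∀ j, c j ∈ G) ∧ u ∈ c 0 ∧ v ∈ c (Fin.last p) ∧
      ∀ j : Fin p, ∃ w : Fin n, w ∈ c j.castSucc ∧ w ∈ c j.succ := by
  induction h with
  | refl =>
    obtain ⟨e, he, hue⟩ := hu
    exact ⟨0, fun _ => e, fun _ => he, hue, hue, fun j => j.elim0⟩
  | @tail x y _ hxy ih =>
    obtain ⟨p, c, hcG, hu0, hxc, hlink⟩ := ih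
    obtain ⟨e, he, hxe, hye⟩ := hxy
    refine ⟨p + 1, Fin.snoc c e, fun j => ?_, ?_, by simpa using hye, fun j => ?_⟩
    · induction j using Fin.lastCases with
      | last => simpa using he
      | cast j => simpa using hcG j
    · rwa [← Fin.castSucc_zero, Fin.snoc_castSucc]
    · induction j using Fin.lastCases with
      | last => exact ⟨x, by simpa using hxc, by simpa [Fin.succ_last] using hxe⟩
      | cast j =>
        obtain ⟨w, hw, hw'⟩ := hlink j
        exact ⟨w, by simpa using hw, by rwa [Fin.succ_castSucc, Fin.snoc_castSucc]⟩

theorem exists_closed_of_not_mhConnected {G : Multiset (Multiset (Fin n))}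
    {e₀ : Multiset (Fin n)} {v₀ : Fin n} (he₀ : e₀ ∈ G) (hv₀ : v₀ ∈ e₀) (h : ¬ MHConnected G) :
    ∃ S : Set (Fin n), (∀ v ∈ e₀, v ∈ S) ∧ (∀ e ∈ G, ∀ u ∈ e, ∀ v ∈ e, u ∈ S → v ∈ S) ∧
      ∃ e ∈ G, ∃ v ∈ e, v ∉ S := by
  refine ⟨{w | Relation.ReflTransGen (SharesEdge G) v₀ w},
    fun v hv => .single ⟨e₀, he₀, hv₀, hv⟩,
    fun e he u hu v hv hS => hS.tail ⟨e, he, hu, hv⟩, ?_⟩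
  by_contra! hall
  refine h fun u v hu hv => exists_chain_of_reflTransGen ?_ hu
  obtain ⟨eu, heu, hu⟩ := hu
  obtain ⟨ev, hev, hv⟩ := hv
  exact (symm_of _ (hall eu heu u hu)).trans (hall ev hev v hv)

end Connectivity

section Splitting

open MeasureTheory

variable {n r : ℕ}

def IsUnionOfComponents (S : Set (Fin n)) (α : MHG n r) : Prop :=
  ∀ e, α e ≠ 0 → ∀ u ∈ (e : Multiset (Fin n)), ∀ v ∈ (e : Multiset (Fin n)), u ∈ S → v ∈ S

theorem IsUnionOfComponents.mono {S : Set (Fin n)} {α γ : MHG n r}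
    (hα : IsUnionOfComponents S α) (hγ : γ ≤ α) : IsUnionOfComponents S γ :=
  fun e he => hα e ((Nat.pos_of_ne_zero he).trans_le (hγ e)).ne'

def edgesAvoiding (S : Set (Fin n)) : Set (Sym (Fin n) r) :=
  {e | ∀ v ∈ (e : Multiset (Fin n)), v ∉ S}

theorem degM_indicator_edgesAvoiding (S : Set (Fin n)) (γ : MHG n r) {i : Fin n} (hi : i ∈ S) :
    degM (edgesOf ((edgesAvoiding S).indicator γ)) i = 0 :=
  degM_edgesOf_eq_zero fun e he hie => by
    have he : e ∈ edgesAvoiding S := by by_contra h; simp [h] at he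
    exact he i hie hi

theorem degM_indicator_compl_edgesAvoiding {S : Set (Fin n)} {γ : MHG n r}
    (hγ : IsUnionOfComponents S γ) {i : Fin n} (hi : i ∉ S) :
    degM (edgesOf ((edgesAvoiding S)ᶜ.indicator γ)) i = 0 :=
  degM_edgesOf_eq_zero fun e he hie => by
    have hγe : γ e ≠ 0 := by intro h; simp [h] at he
    obtain ⟨u, hue, huS⟩ : ∃ u ∈ (e : Multiset (Fin n)), u ∈ S := by
      by_contra! h
      exact he (Set.indicator_of_notMem (not_not.mpr h) γ)
    exact hi (hγ e hγe u hue i hie huS)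

variable (π : Measure ℝ) [IsProbabilityMeasure π] (lam : ℝ) {S : Set (Fin n)} {γ : MHG n r}

theorem integral_XPow_split (hγ : IsUnionOfComponents S γ) :
    ∫ θ, XPow lam θ γ ∂(Measure.pi fun _ => π) =
      (∫ θ, XPow lam θ ((edgesAvoiding S)ᶜ.indicator γ) ∂(Measure.pi fun _ => π)) *
        ∫ θ, XPow lam θ ((edgesAvoiding S).indicator γ) ∂(Measure.pi fun _ => π) := by
  conv_lhs => rw [← Set.indicator_compl_add_self (edgesAvoiding S) γ]
  refine integral_XPow_add π lam fun i => ?_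
  by_cases hi : i ∈ S
  · exact .inr (degM_indicator_edgesAvoiding S γ hi)
  · exact .inl (degM_indicator_compl_edgesAvoiding hγ hi)

theorem integral_xEst_mul_XPow_split (m : ℕ) (hmn : m ≤ n) (hbar : ∀ v ∈ barEdge n m, v ∈ S)
    (hγ : IsUnionOfComponents S γ) :
    ∫ θ, xEst m hmn θ * XPow lam θ γ ∂(Measure.pi fun _ => π) =
      (∫ θ, xEst m hmn θ * XPow lam θ ((edgesAvoiding S)ᶜ.indicator γ)
          ∂(Measure.pi fun _ => π)) *
        ∫ θ, XPow lam θ ((edgesAvoiding S).indicator γ) ∂(Measure.pi fun _ => π) := by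
  conv_lhs => rw [← Set.indicator_compl_add_self (edgesAvoiding S) γ]
  refine integral_xEst_mul_XPow_add π lam m hmn fun i => ?_
  by_cases hi : i ∈ S
  · exact .inr (degM_indicator_edgesAvoiding S γ hi)
  · refine .inl ?_
    rw [degM_barGraph, degM_indicator_compl_edgesAvoiding hγ hi,
      Multiset.count_eq_zero_of_notMem fun h => hi (hbar i h)]

end Splitting

section Vanishing

open MeasureTheory

variable {n r m : ℕ} {hmn : m ≤ n} {lam : ℝ} {π : Measure ℝ} [IsProbabilityMeasure π]
  {κ : MHG n r → ℝ}

theorem cumulant_eq_zero_of_degM_eq_one (hmean : ∫ y, y ∂π = 0)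
    (hκ : CumulantRecursion (fun α => ∫ θ, xEst m hmn θ * XPow lam θ α ∂(Measure.pi fun _ => π))
      (fun α => ∫ θ, XPow lam θ α ∂(Measure.pi fun _ => π)) κ)
    {α : MHG n r} {i : Fin n} (h : degM (barGraph m α) i = 1) : κ α = 0 := by
  refine hκ.eq_zero_of_vanishing (integral_XPow_zero π lam) (fun γ => degM (barGraph m γ) i = 1)
    (fun γ => degM (edgesOf γ) i = 1) (fun _ => integral_xEst_mul_XPow_eq_zero lam hmean m hmn)
    (fun _ => integral_XPow_eq_zero lam hmean) (fun γ β hβ hγ => ?_) α h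
  have hsplit := congrFun (degM_barGraph_add m β (γ - β)) i
  rw [add_tsub_cancel_of_le hβ, Pi.add_apply] at hsplit
  omega

theorem cumulant_eq_zero_of_not_mhConnected (hm : 0 < m)
    (hκ : CumulantRecursion (fun α => ∫ θ, xEst m hmn θ * XPow lam θ α ∂(Measure.pi fun _ => π))
      (fun α => ∫ θ, XPow lam θ α ∂(Measure.pi fun _ => π)) κ)
    {α : MHG n r} (h : ¬ MHConnected (barGraph m α)) : κ α = 0 := by
  have hv₀ : (⟨0, hm.trans_le hmn⟩ : Fin n) ∈ barEdge n m := by simp [barEdge, hm]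
  obtain ⟨S, hbar, hclosed, e₁, he₁, v, hve₁, hvS⟩ :=
    exists_closed_of_not_mhConnected (Multiset.mem_cons_self _ _) hv₀ h
  have hα : IsUnionOfComponents S α := fun e he =>
    hclosed e (Multiset.mem_cons_of_mem (mem_edgesOf.mpr ⟨e, he, rfl⟩))
  refine hκ.eq_zero_of_factor (integral_XPow_zero π lam) (edgesAvoiding S)
    (fun γ hγ => integral_xEst_mul_XPow_split π lam m hmn hbar (hα.mono hγ))
    (fun γ hγ => integral_XPow_split π lam (hα.mono hγ)) α le_rfl ?_
  -- `e₁` is not the added edge, which lies in `S`; so it is an edge of `α` avoiding `S`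
  obtain he₁ | he₁ := Multiset.mem_cons.mp he₁
  · exact (hvS (hbar v (he₁ ▸ hve₁))).elim
  obtain ⟨e, he, rfl⟩ := mem_edgesOf.mp he₁
  have hout : e ∈ edgesAvoiding S := fun u hu huS => hvS (hα e he u hu v hve₁ huS)
  exact fun h0 => he (by simpa [hout] using congrFun h0 e)

end Vanishing

theorem cumulants_vanish_for_non_good_general (n r m : ℕ) (hm : 2 ≤ m)
    (hmn : m ≤ n) (lam : ℝ)
    (π : Measure ℝ) [IsProbabilityMeasure π]
    (hmean : (∫ y, y ∂π) = 0)
    (κ : MHG n r → ℝ)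
    (hκ : ∀ α : MHG n r, κ α =
      (∫ θ, xEst m hmn θ * XPow lam θ α ∂(Measure.pi fun _ : Fin n => π)) -
        ∑ β ∈ (Finset.Iic α).erase α,
          (mhgChoose α β : ℝ) *
            (∫ θ, XPow lam θ (α - β) ∂(Measure.pi fun _ : Fin n => π)) * κ β) :
    ∀ α : MHG n r, ¬ GoodMHG m α → κ α = 0 := by
  intro α hα
  by_cases hdeg : ∃ i, degM (barGraph m α) i = 1
  · obtain ⟨i, hi⟩ := hdeg
    exact cumulant_eq_zero_of_degM_eq_one hmean hκ hi
  · refine cumulant_eq_zero_of_not_mhConnected (by omega) hκ fun hconn =>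
      hα (.inr ⟨hconn, fun i hi => ?_⟩)
    have := not_exists.mp hdeg i
    omega

/-- Lemma 6.1: vanishing of cumulants for non-good graphs in tensor PCA.
θ has i.i.d. entries from a prior π with mean 0 and all moments finite, X = λθ^{⊗r},
x = ∏_{i=1}^m θ_i, and the joint cumulants κ_α are defined by the recursion
κ_α = E[x·X^α] − Σ_{0 ≤ β < α} binom(α,β)·E[X^{α−β}]·κ_β.  Then κ_α = 0 whenever
α is not good. -/
theorem cumulants_vanish_for_non_good (n r m : ℕ) (hr : 2 ≤ r) (hm : 2 ≤ m)
    (hmn : m ≤ n) (lam : ℝ) (hlam : 0 ≤ lam)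
    (π : Measure ℝ) [IsProbabilityMeasure π]
    (hmean : (∫ y, y ∂π) = 0)
    (hmom : ∀ t : ℕ, Integrable (fun y : ℝ => |y| ^ t) π)
    (κ : MHG n r → ℝ)
    (hκ : ∀ α : MHG n r, κ α =
      (∫ θ, xEst m hmn θ * XPow lam θ α ∂(Measure.pi fun _ : Fin n => π)) -
        ∑ β ∈ (Finset.Iic α).erase α,
          (mhgChoose α β : ℝ) *
            (∫ θ, XPow lam θ (α - β) ∂(Measure.pi fun _ : Fin n => π)) * κ β) :
    ∀ α : MHG n r, ¬ GoodMHG m α → κ α = 0 :=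
  cumulants_vanish_for_non_good_general n r m hm hmn lam π hmean κ hκ
end

section
/- Cumulant bound for tensor PCA with general prior (Lemma 6.2): In the setting of the cumulant recursion for tensor PCA with estimand x = ∏_{i=1}^m θ_i and prior π with mean 0 and variance 1, define M(t) = max_{0 ≤ s ≤ t} E[|π|^s], δ(γ) = Σ_{i ∈ V(γ): deg_γ(i) ≥ 3} deg_γ(i), and the complexity function 𝓗 recursively by 𝓗(0) = 1 and 𝓗(α) = Σ_{β < α, β good} binom(α,β)·𝓗(β). Then for every good multi-hypergraph α, |κ_α| ≤ λ^{|α|} · M(δ(ᾱ)) · 𝓗(α). -/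
open MeasureTheory

open scoped Classical

/-- M(t) = max_{0 ≤ s ≤ t} E[|π|^s]. -/
noncomputable def Mmom (π : Measure ℝ) (t : ℕ) : ℝ :=
  sSup {x : ℝ | ∃ s : ℕ, s ≤ t ∧ x = ∫ y, |y| ^ s ∂π}

/-- δ(γ) = Σ_{i ∈ V(γ) : deg_γ(i) ≥ 3} deg_γ(i). -/
def excessDeg {n : ℕ} (G : Multiset (Multiset (Fin n))) : ℕ :=
  ∑ i : Fin n, if 3 ≤ degM G i then degM G i else 0

/-!
Both expectations in the recursion factor over the vertices:
`E[x X^γ] = λ^{|γ|} ∏ᵢ E[θ^{deg_γ̄ i}]`, and likewise for `E[X^γ]`.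

First, `κ_α = 0` unless `α` is good, by induction on `α`. If a vertex of `ᾱ` has degree one,
each term of the recursion contains a factor `E[θ] = 0` or a smaller cumulant that vanishes.
If `ᾱ` is disconnected, write `α = α₁ + α₂` with `α₂` the part outside the component of the
extra hyperedge: the recursion for `α` is `E[X^{α₂}]` times the recursion for `α₁`, and `κ_α`
cancels.

Hence only good `β ≠ 0` contribute to the recursion, and the bound follows by induction from
`|E[X^{α-β}]| ≤ λ^{|α-β|} M(δ(α-β))`, `M(a) M(b) ≤ M(a + b)` and `δ(α-β) + δ(β̄) ≤ δ(ᾱ)`.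
The moment bounds rest on `E|θ|^d ≤ 1` for `d ≤ 2` and on Chebyshev's inequality
`E|θ|^a E|θ|^b ≤ E|θ|^{a+b}` for the comonotone functions `|y|^a` and `|y|^b`.
-/

namespace TensorPCA

open Finset

section Chebyshev
variable {Ω : Type*} [MeasurableSpace Ω] {μ : Measure Ω} [IsProbabilityMeasure μ]

theorem integral_mul_integral_le_integral_mul {f g : Ω → ℝ} (hfg : Monovary f g)
    (hf : Integrable f μ) (hg : Integrable g μ) (hfg' : Integrable (f * g) μ) :
    (∫ x, f x ∂μ) * (∫ x, g x ∂μ) ≤ ∫ x, f x * g x ∂μ := by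
  have hcross : ∀ u v : Ω → ℝ, Integrable u μ → Integrable v μ →
      Integrable (fun z : Ω × Ω => u z.1 * v z.2) (μ.prod μ) := fun u v hu hv => hu.mul_prod hv
  have hnonneg : 0 ≤ ∫ z : Ω × Ω, (f z.2 - f z.1) * (g z.2 - g z.1) ∂μ.prod μ :=
    integral_nonneg fun z => hfg.sub_mul_sub_nonneg z.1 z.2
  have hexpand : (fun z : Ω × Ω => (f z.2 - f z.1) * (g z.2 - g z.1)) = fun z =>
      ((f * g) z.1 + (f * g) z.2) - (f z.1 * g z.2 + g z.1 * f z.2) := by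
    ext z; simp only [Pi.mul_apply]; ring
  have hdiag : Integrable (fun z : Ω × Ω => (f * g) z.1 + (f * g) z.2) (μ.prod μ) :=
    (hfg'.comp_fst μ).add (hfg'.comp_snd μ)
  have hoff : Integrable (fun z : Ω × Ω => f z.1 * g z.2 + g z.1 * f z.2) (μ.prod μ) :=
    (hcross f g hf hg).add (hcross g f hg hf)
  rw [hexpand, integral_sub hdiag hoff, integral_add (hfg'.comp_fst μ) (hfg'.comp_snd μ),
    integral_add (hcross f g hf hg) (hcross g f hg hf), integral_fun_fst, integral_fun_snd,
    integral_prod_mul, integral_prod_mul] at hnonneg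
  simp only [probReal_univ, one_smul, Pi.mul_apply] at hnonneg
  linarith

end Chebyshev

section Moments
variable {π : Measure ℝ}

lemma monovary_abs_pow (a b : ℕ) : Monovary (fun y : ℝ => |y| ^ a) (fun y : ℝ => |y| ^ b) :=
  fun _ _ h => pow_le_pow_left₀ (abs_nonneg _)
    (lt_of_pow_lt_pow_left₀ b (abs_nonneg _) h).le a

lemma integral_abs_pow_mul_le [IsProbabilityMeasure π]
    (hmom : ∀ t : ℕ, Integrable (fun y : ℝ => |y| ^ t) π) (a b : ℕ) :
    (∫ y, |y| ^ a ∂π) * (∫ y, |y| ^ b ∂π) ≤ ∫ y, |y| ^ (a + b) ∂π := by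
  simp_rw [pow_add]
  refine integral_mul_integral_le_integral_mul (monovary_abs_pow a b) (hmom a) (hmom b) ?_
  simpa only [Pi.mul_def, ← pow_add] using hmom (a + b)

lemma Mmom_set_eq_image (π : Measure ℝ) (t : ℕ) :
    {x : ℝ | ∃ s : ℕ, s ≤ t ∧ x = ∫ y, |y| ^ s ∂π} =
      (fun s : ℕ => ∫ y, |y| ^ s ∂π) '' Set.Iic t := by
  ext x; simp [eq_comm]

lemma integral_abs_pow_le_Mmom {s t : ℕ} (h : s ≤ t) : ∫ y, |y| ^ s ∂π ≤ Mmom π t :=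
  le_csSup (by rw [Mmom_set_eq_image]; exact ((Set.finite_Iic t).image _).bddAbove) ⟨s, h, rfl⟩

lemma exists_Mmom_eq (π : Measure ℝ) (t : ℕ) :
    ∃ s ≤ t, Mmom π t = ∫ y, |y| ^ s ∂π := by
  have hmem : Mmom π t ∈ (fun s : ℕ => ∫ y, |y| ^ s ∂π) '' Set.Iic t := by
    rw [Mmom, Mmom_set_eq_image]
    exact ((Set.nonempty_Iic).image _).csSup_mem ((Set.finite_Iic t).image _)
  obtain ⟨s, hs, h⟩ := hmem
  exact ⟨s, hs, h.symm⟩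

lemma Mmom_mono (π : Measure ℝ) : Monotone (Mmom π) := fun a b hab => by
  obtain ⟨s, hs, h⟩ := exists_Mmom_eq π a
  exact h ▸ integral_abs_pow_le_Mmom (hs.trans hab)

lemma one_le_Mmom [IsProbabilityMeasure π] (t : ℕ) : 1 ≤ Mmom π t := by
  simpa using integral_abs_pow_le_Mmom (π := π) (Nat.zero_le t)

lemma Mmom_mul_le [IsProbabilityMeasure π]
    (hmom : ∀ t : ℕ, Integrable (fun y : ℝ => |y| ^ t) π) (a b : ℕ) :
    Mmom π a * Mmom π b ≤ Mmom π (a + b) := by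
  obtain ⟨s, hs, hsa⟩ := exists_Mmom_eq π a
  obtain ⟨t, ht, htb⟩ := exists_Mmom_eq π b
  rw [hsa, htb]
  exact (integral_abs_pow_mul_le hmom s t).trans (integral_abs_pow_le_Mmom (add_le_add hs ht))

lemma integral_abs_pow_le_one [IsProbabilityMeasure π]
    (hvar : ∫ y, y ^ 2 ∂π = 1) (hmom : ∀ t : ℕ, Integrable (fun y : ℝ => |y| ^ t) π)
    {d : ℕ} (hd : d ≤ 2) : ∫ y, |y| ^ d ∂π ≤ 1 := by
  have h2 : ∫ y, |y| ^ 2 ∂π = 1 := by simpa only [sq_abs] using hvar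
  interval_cases d
  · simp
  · -- `(E|y|)² ≤ E|y|²`
    have h1 : 0 ≤ ∫ y, |y| ^ 1 ∂π := integral_nonneg fun y => pow_nonneg (abs_nonneg y) 1
    nlinarith [integral_abs_pow_mul_le hmom 1 1]
  · exact h2.le

lemma prod_integral_abs_pow_le_Mmom [IsProbabilityMeasure π]
    (hvar : ∫ y, y ^ 2 ∂π = 1) (hmom : ∀ t : ℕ, Integrable (fun y : ℝ => |y| ^ t) π)
    {ι : Type*} (s : Finset ι) (d : ι → ℕ) :
    ∏ i ∈ s, ∫ y, |y| ^ d i ∂π ≤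
      Mmom π (∑ i ∈ s, if 3 ≤ d i then d i else 0) := by
  induction s using Finset.cons_induction with
  | empty => simpa using one_le_Mmom (π := π) 0
  | cons j s hj ih =>
    rw [prod_cons, sum_cons]
    have hprod : 0 ≤ ∏ i ∈ s, ∫ y, |y| ^ d i ∂π :=
      prod_nonneg fun i _ => integral_nonneg fun y => pow_nonneg (abs_nonneg y) _
    split_ifs with h3
    · calc (∫ y, |y| ^ d j ∂π) * ∏ i ∈ s, ∫ y, |y| ^ d i ∂π
          ≤ Mmom π (d j) * Mmom π (∑ i ∈ s, if 3 ≤ d i then d i else 0) :=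
            mul_le_mul (integral_abs_pow_le_Mmom le_rfl) ih hprod
              (zero_le_one.trans (one_le_Mmom _))
        _ ≤ _ := Mmom_mul_le hmom _ _
    · rw [zero_add]
      exact (mul_le_of_le_one_left hprod
        (integral_abs_pow_le_one hvar hmom (d := d j) (by omega))).trans ih

end Moments

section Degrees
variable {n r : ℕ}

lemma degM_add (G G' : Multiset (Multiset (Fin n))) (i : Fin n) :
    degM (G + G') i = degM G i + degM G' i := by
  simp [degM]

lemma degM_cons (e : Multiset (Fin n)) (G : Multiset (Multiset (Fin n))) (i : Fin n) :
    degM (e ::ₘ G) i = e.count i + degM G i := by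
  simp [degM]

lemma degM_eq_zero_iff {G : Multiset (Multiset (Fin n))} {i : Fin n} :
    degM G i = 0 ↔ ∀ e ∈ G, i ∉ e := by
  simp [degM, Multiset.sum_eq_zero_iff]

lemma excessDeg_add_le (G G' : Multiset (Multiset (Fin n))) :
    excessDeg G + excessDeg G' ≤ excessDeg (G + G') := by
  rw [excessDeg, excessDeg, excessDeg, ← sum_add_distrib]
  refine sum_le_sum fun i _ => ?_
  rw [degM_add]
  split_ifs <;> omega

lemma edgesOf_add (α β : MHG n r) : edgesOf (α + β) = edgesOf α + edgesOf β := by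
  simp [edgesOf, Multiset.replicate_add, sum_add_distrib]

lemma barGraph_add (m : ℕ) (α β : MHG n r) :
    barGraph m (α + β) = barGraph m α + edgesOf β := by
  simp [barGraph, edgesOf_add]

lemma barGraph_eq_edgesOf_sub_add {m : ℕ} {α β : MHG n r} (h : β ≤ α) :
    barGraph m α = edgesOf (α - β) + barGraph m β := by
  rw [add_comm, ← barGraph_add, add_tsub_cancel_of_le h]

lemma mem_edgesOf {α : MHG n r} {e : Multiset (Fin n)} :
    e ∈ edgesOf α ↔ ∃ s, α s ≠ 0 ∧ (s : Multiset (Fin n)) = e := by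
  simp [edgesOf, Multiset.mem_sum, Multiset.mem_replicate, eq_comm]

lemma barGraph_subset {m : ℕ} {α β : MHG n r} (h : β ≤ α) :
    barGraph m β ⊆ barGraph m α := by
  rw [barGraph_eq_edgesOf_sub_add h]
  exact Multiset.subset_of_le (Multiset.le_add_left _ _)

lemma count_barEdge_of_lt {m : ℕ} {i : Fin n} (hi : (i : ℕ) < m) : (barEdge n m).count i = 1 :=
  Multiset.count_eq_one_of_mem (Finset.nodup _) (by simp [barEdge, hi])

lemma edgeCount_add (α β : MHG n r) : edgeCount (α + β) = edgeCount α + edgeCount β := by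
  simp [edgeCount, sum_add_distrib]

lemma mhgChoose_self (α : MHG n r) : mhgChoose α α = 1 := by
  simp [mhgChoose]

lemma mhgChoose_zero_right (α : MHG n r) : mhgChoose α 0 = 1 := by
  simp [mhgChoose]

lemma mhgChoose_add_of_disjoint {β γ δ : MHG n r} (hγδ : ∀ e, γ e = 0 ∨ δ e = 0)
    (h : β ≤ γ) :
    mhgChoose (γ + δ) β = mhgChoose γ β := by
  refine prod_congr rfl fun e _ => ?_
  rcases hγδ e with hγ | hδ
  · have hβ : β e = 0 := Nat.le_zero.1 (hγ ▸ h e)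
    simp [hγ, hβ]
  · simp [hδ]

end Degrees

section Monomials
variable {n r : ℕ}

def graphMonomial (θ : Fin n → ℝ) (G : Multiset (Multiset (Fin n))) : ℝ :=
  (G.map fun e => (e.map θ).prod).prod

lemma graphMonomial_eq_prod_pow_degM (θ : Fin n → ℝ) (G : Multiset (Multiset (Fin n))) :
    graphMonomial θ G = ∏ i, θ i ^ degM G i := by
  induction G using Multiset.induction with
  | empty => simp [graphMonomial, degM]
  | cons e G ih =>
    have he : (e.map θ).prod = ∏ i, θ i ^ e.count i := by
      rw [Finset.prod_multiset_map_count]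
      exact prod_subset (subset_univ _) fun i _ hi => by simp_all
    rw [graphMonomial, Multiset.map_cons, Multiset.prod_cons, ← graphMonomial, ih, he,
      ← prod_mul_distrib]
    simp only [degM_cons, pow_add]

lemma XPow_eq (lam : ℝ) (θ : Fin n → ℝ) (α : MHG n r) :
    XPow lam θ α = lam ^ edgeCount α * graphMonomial θ (edgesOf α) := by
  have hmap : (edgesOf α).map (fun e => (e.map θ).prod) =
      ∑ e : Sym (Fin n) r, Multiset.replicate (α e) (((e : Multiset (Fin n)).map θ).prod) := by
    rw [edgesOf, ← Multiset.coe_mapAddMonoidHom, map_sum]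
    simp [Multiset.map_replicate]
  rw [XPow, graphMonomial, hmap, Multiset.prod_sum, edgeCount, ← prod_pow_eq_pow_sum,
    ← prod_mul_distrib]
  simp [mul_pow]

lemma xEst_eq {m : ℕ} (hmn : m ≤ n) (θ : Fin n → ℝ) :
    xEst m hmn θ = ((barEdge n m).map θ).prod := by
  have : (univ.filter fun i : Fin n => (i : ℕ) < m) = univ.map (Fin.castLEEmb hmn) := by
    ext i
    simp only [mem_filter, mem_univ, true_and, mem_map, Fin.castLEEmb_apply]
    exact ⟨fun h => ⟨⟨i, h⟩, rfl⟩, by rintro ⟨j, rfl⟩; exact j.isLt⟩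
  rw [barEdge, ← prod_eq_multiset_prod, this, prod_map]
  rfl

lemma xEst_mul_XPow {m : ℕ} (hmn : m ≤ n) (lam : ℝ) (θ : Fin n → ℝ) (α : MHG n r) :
    xEst m hmn θ * XPow lam θ α = lam ^ edgeCount α * graphMonomial θ (barGraph m α) := by
  rw [XPow_eq, xEst_eq, barGraph, graphMonomial, graphMonomial, Multiset.map_cons,
    Multiset.prod_cons]
  ring

end Monomials

section MomentProducts
variable {n r : ℕ} {π : Measure ℝ}

noncomputable def momentProd (π : Measure ℝ) (G : Multiset (Multiset (Fin n))) : ℝ :=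
  ∏ i, ∫ y, y ^ degM G i ∂π

lemma integral_graphMonomial [IsProbabilityMeasure π] (G : Multiset (Multiset (Fin n))) :
    ∫ θ, graphMonomial θ G ∂(Measure.pi fun _ : Fin n => π) = momentProd π G := by
  simp_rw [graphMonomial_eq_prod_pow_degM]
  exact integral_fintype_prod_eq_prod (fun i y => y ^ degM G i)

lemma momentProd_add [IsProbabilityMeasure π] {G G' : Multiset (Multiset (Fin n))}
    (h : ∀ i, degM G i = 0 ∨ degM G' i = 0) :
    momentProd π (G + G') = momentProd π G * momentProd π G' := by
  rw [momentProd, momentProd, momentProd, ← prod_mul_distrib]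
  refine prod_congr rfl fun i _ => ?_
  rcases h i with h | h <;> simp [degM_add, h]

lemma momentProd_eq_zero (hmean : ∫ y, y ∂π = 0) {G : Multiset (Multiset (Fin n))} {v : Fin n}
    (hv : degM G v = 1) : momentProd π G = 0 :=
  prod_eq_zero (mem_univ v) (by simpa [hv] using hmean)

lemma abs_momentProd_le [IsProbabilityMeasure π] (hvar : ∫ y, y ^ 2 ∂π = 1)
    (hmom : ∀ t : ℕ, Integrable (fun y : ℝ => |y| ^ t) π) (G : Multiset (Multiset (Fin n))) :
    |momentProd π G| ≤ Mmom π (excessDeg G) := by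
  rw [momentProd, abs_prod]
  refine (prod_le_prod (fun i _ => abs_nonneg _) fun i _ => ?_).trans
    (prod_integral_abs_pow_le_Mmom hvar hmom univ (degM G))
  simpa only [Real.norm_eq_abs, abs_pow] using norm_integral_le_integral_norm (μ := π)
    (fun y : ℝ => y ^ degM G i)

lemma abs_momentProd_mul_Mmom_le [IsProbabilityMeasure π] (hvar : ∫ y, y ^ 2 ∂π = 1)
    (hmom : ∀ t : ℕ, Integrable (fun y : ℝ => |y| ^ t) π)
    (G G' : Multiset (Multiset (Fin n))) :
    |momentProd π G| * Mmom π (excessDeg G') ≤ Mmom π (excessDeg (G + G')) :=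
  calc |momentProd π G| * Mmom π (excessDeg G')
      ≤ Mmom π (excessDeg G) * Mmom π (excessDeg G') :=
        mul_le_mul_of_nonneg_right (abs_momentProd_le hvar hmom G)
          (zero_le_one.trans (one_le_Mmom _))
    _ ≤ Mmom π (excessDeg G + excessDeg G') := Mmom_mul_le hmom _ _
    _ ≤ Mmom π (excessDeg (G + G')) := Mmom_mono π (excessDeg_add_le G G')

end MomentProducts

section HypergraphMoments
variable {n r m : ℕ} {π : Measure ℝ} {lam : ℝ}

noncomputable def edgeMoment (π : Measure ℝ) (lam : ℝ) (γ : MHG n r) : ℝ :=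
  lam ^ edgeCount γ * momentProd π (edgesOf γ)

noncomputable def barMoment (π : Measure ℝ) (lam : ℝ) (m : ℕ) (γ : MHG n r) : ℝ :=
  lam ^ edgeCount γ * momentProd π (barGraph m γ)

lemma integral_XPow [IsProbabilityMeasure π] (lam : ℝ) (γ : MHG n r) :
    ∫ θ, XPow lam θ γ ∂(Measure.pi fun _ : Fin n => π) = edgeMoment π lam γ := by
  simp_rw [XPow_eq, integral_const_mul, integral_graphMonomial, edgeMoment]

lemma integral_xEst_mul_XPow [IsProbabilityMeasure π] (hmn : m ≤ n) (lam : ℝ) (γ : MHG n r) :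
    ∫ θ, xEst m hmn θ * XPow lam θ γ ∂(Measure.pi fun _ : Fin n => π) =
      barMoment π lam m γ := by
  simp_rw [xEst_mul_XPow, integral_const_mul, integral_graphMonomial, barMoment]

lemma edgeMoment_zero [IsProbabilityMeasure π] : edgeMoment π lam (0 : MHG n r) = 1 := by
  simp [edgeMoment, momentProd, edgesOf, degM, edgeCount]

lemma edgeMoment_add [IsProbabilityMeasure π] {γ δ : MHG n r}
    (h : ∀ i, degM (edgesOf γ) i = 0 ∨ degM (edgesOf δ) i = 0) :
    edgeMoment π lam (γ + δ) = edgeMoment π lam γ * edgeMoment π lam δ := by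
  rw [edgeMoment, edgeMoment, edgeMoment, edgeCount_add, edgesOf_add, momentProd_add h, pow_add]
  ring

lemma barMoment_add [IsProbabilityMeasure π] {γ δ : MHG n r}
    (h : ∀ i, degM (barGraph m γ) i = 0 ∨ degM (edgesOf δ) i = 0) :
    barMoment π lam m (γ + δ) = barMoment π lam m γ * edgeMoment π lam δ := by
  rw [barMoment, barMoment, edgeMoment, edgeCount_add, barGraph_add, momentProd_add h, pow_add]
  ring

lemma abs_barMoment_le [IsProbabilityMeasure π] (hlam : 0 ≤ lam) (hvar : ∫ y, y ^ 2 ∂π = 1)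
    (hmom : ∀ t : ℕ, Integrable (fun y : ℝ => |y| ^ t) π) (γ : MHG n r) :
    |barMoment π lam m γ| ≤ lam ^ edgeCount γ * Mmom π (excessDeg (barGraph m γ)) := by
  rw [barMoment, abs_mul, abs_of_nonneg (pow_nonneg hlam _)]
  exact mul_le_mul_of_nonneg_left (abs_momentProd_le hvar hmom _) (pow_nonneg hlam _)

lemma abs_edgeMoment_sub_mul_le [IsProbabilityMeasure π] (hlam : 0 ≤ lam)
    (hvar : ∫ y, y ^ 2 ∂π = 1) (hmom : ∀ t : ℕ, Integrable (fun y : ℝ => |y| ^ t) π)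
    {α β : MHG n r} (hβ : β ≤ α) :
    |edgeMoment π lam (α - β)| * (lam ^ edgeCount β * Mmom π (excessDeg (barGraph m β))) ≤
      lam ^ edgeCount α * Mmom π (excessDeg (barGraph m α)) := by
  have hM := abs_momentProd_mul_Mmom_le hvar hmom (edgesOf (α - β)) (barGraph m β)
  rw [← barGraph_eq_edgesOf_sub_add hβ] at hM
  have hpow : lam ^ edgeCount (α - β) * lam ^ edgeCount β = lam ^ edgeCount α := by
    rw [← pow_add, ← edgeCount_add, tsub_add_cancel_of_le hβ]
  rw [edgeMoment, abs_mul, abs_of_nonneg (pow_nonneg hlam _), ← hpow]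
  calc lam ^ edgeCount (α - β) * |momentProd π (edgesOf (α - β))| *
        (lam ^ edgeCount β * Mmom π (excessDeg (barGraph m β)))
      = lam ^ edgeCount (α - β) * lam ^ edgeCount β *
          (|momentProd π (edgesOf (α - β))| * Mmom π (excessDeg (barGraph m β))) := by ring
    _ ≤ _ := mul_le_mul_of_nonneg_left hM (by positivity)

end HypergraphMoments

section Connectivity
variable {V : Type*}

def meetGraph (G : Multiset (Multiset V)) : SimpleGraph (Multiset V) where
  Adj e f := e ≠ f ∧ e ∈ G ∧ f ∈ G ∧ ∃ w, w ∈ e ∧ w ∈ f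
  symm := ⟨by
    rintro e f ⟨hne, he, hf, w, hwe, hwf⟩
    exact ⟨hne.symm, hf, he, w, hwf, hwe⟩⟩
  loopless := ⟨fun _ h => h.1 rfl⟩

lemma meetGraph_adj {G : Multiset (Multiset V)} {e f : Multiset V} :
    (meetGraph G).Adj e f ↔ e ≠ f ∧ e ∈ G ∧ f ∈ G ∧ ∃ w, w ∈ e ∧ w ∈ f :=
  Iff.rfl

lemma meetGraph_mono {G G' : Multiset (Multiset V)} (h : G ⊆ G') : meetGraph G ≤ meetGraph G' :=
  fun _ _ hadj => by
    obtain ⟨hne, he, hf, hw⟩ := meetGraph_adj.1 hadj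
    exact ⟨hne, h he, h hf, hw⟩

lemma meetGraph_reachable {G : Multiset (Multiset V)} {e f : Multiset V} {w : V}
    (he : e ∈ G) (hf : f ∈ G) (hwe : w ∈ e) (hwf : w ∈ f) :
    (meetGraph G).Reachable e f := by
  by_cases hef : e = f
  · exact hef ▸ SimpleGraph.Reachable.refl e
  · exact SimpleGraph.Adj.reachable (meetGraph_adj.2 ⟨hef, he, hf, w, hwe, hwf⟩)

lemma mem_of_meetGraph_reachable {G : Multiset (Multiset V)} {e f : Multiset V}
    (h : (meetGraph G).Reachable e f) (he : e ∈ G) : f ∈ G := by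
  obtain ⟨p⟩ := h.symm
  cases p with
  | nil => exact he
  | cons hadj _ => exact (meetGraph_adj.1 hadj).2.1

end Connectivity

section MHConnected
variable {n : ℕ} {G : Multiset (Multiset (Fin n))}

lemma MHConnected.reachable (hG : MHConnected G) {e f : Multiset (Fin n)} {u v : Fin n}
    (he : e ∈ G) (hf : f ∈ G) (hu : u ∈ e) (hv : v ∈ f) : (meetGraph G).Reachable e f := by
  obtain ⟨p, c, hc, hu0, hvp, hlink⟩ := hG u v ⟨e, he, hu⟩ ⟨f, hf, hv⟩
  have hchain : ∀ j, (meetGraph G).Reachable e (c j) := fun j => by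
    induction j using Fin.induction with
    | zero => exact meetGraph_reachable he (hc 0) hu hu0
    | succ j ih =>
      obtain ⟨w, hw, hw'⟩ := hlink j
      exact ih.trans (meetGraph_reachable (hc _) (hc _) hw hw')
  exact (hchain (Fin.last p)).trans (meetGraph_reachable (hc _) hf hvp hv)

lemma mhConnected_of_forall_reachable {b : Multiset (Fin n)}
    (h : ∀ e ∈ G, (meetGraph G).Reachable b e) : MHConnected G := by
  rintro u v ⟨e, he, hu⟩ ⟨f, hf, hv⟩
  obtain ⟨q⟩ := (h e he).symm.trans (h f hf)
  refine ⟨q.length, fun j => q.getVert j, fun j => ?_, ?_, ?_, fun j => ?_⟩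
  · exact mem_of_meetGraph_reachable ⟨q.take j⟩ he
  · simpa using hu
  · simpa using hv
  · exact (meetGraph_adj.1 (q.adj_getVert_succ j.isLt)).2.2.2

end MHConnected

section BarComponent
variable {n r m : ℕ}

noncomputable def barComponent (m : ℕ) (α : MHG n r) : MHG n r := fun e =>
  if (meetGraph (barGraph m α)).Reachable (barEdge n m) e then α e else 0

lemma barComponent_le (α : MHG n r) : barComponent m α ≤ α := fun e => by
  unfold barComponent; split_ifs <;> simp

lemma barComponent_disjoint (α : MHG n r) (e : Sym (Fin n) r) :
    barComponent m α e = 0 ∨ (α - barComponent m α) e = 0 := by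
  by_cases h : (meetGraph (barGraph m α)).Reachable (barEdge n m) e <;> simp [barComponent, h]

lemma barEdge_mem_barGraph (α : MHG n r) : barEdge n m ∈ barGraph m α :=
  Multiset.mem_cons_self _ _

lemma reachable_of_mem_barGraph_barComponent {α : MHG n r} {e : Multiset (Fin n)}
    (he : e ∈ barGraph m (barComponent m α)) :
    (meetGraph (barGraph m α)).Reachable (barEdge n m) e := by
  rcases Multiset.mem_cons.1 he with rfl | he
  · rfl
  · obtain ⟨s, hs, rfl⟩ := mem_edgesOf.1 he
    by_contra h
    exact hs (by simp [barComponent, h])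

lemma not_reachable_of_mem_edgesOf_sub_barComponent {α : MHG n r} {e : Multiset (Fin n)}
    (he : e ∈ edgesOf (α - barComponent m α)) :
    e ∈ barGraph m α ∧ ¬(meetGraph (barGraph m α)).Reachable (barEdge n m) e := by
  obtain ⟨s, hs, rfl⟩ := mem_edgesOf.1 he
  refine ⟨barGraph_subset tsub_le_self (Multiset.mem_cons_of_mem he), fun h => hs ?_⟩
  simp [barComponent, h]

lemma degM_barComponent_disjoint (α : MHG n r) (i : Fin n) :
    degM (barGraph m (barComponent m α)) i = 0 ∨
      degM (edgesOf (α - barComponent m α)) i = 0 := by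
  simp only [degM_eq_zero_iff]
  by_contra! h
  obtain ⟨⟨e, he, hie⟩, ⟨f, hf, hif⟩⟩ := h
  obtain ⟨hfα, hnot⟩ := not_reachable_of_mem_edgesOf_sub_barComponent hf
  have hreach := reachable_of_mem_barGraph_barComponent he
  exact hnot (hreach.trans (meetGraph_reachable
    (mem_of_meetGraph_reachable hreach (barEdge_mem_barGraph α)) hfα hie hif))

lemma mhConnected_of_barComponent_eq {α : MHG n r} (h : barComponent m α = α) :
    MHConnected (barGraph m α) := by
  refine mhConnected_of_forall_reachable (b := barEdge n m) fun e he => ?_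
  exact reachable_of_mem_barGraph_barComponent (by rwa [h])

lemma le_barComponent_of_good (hm : 0 < m) (hmn : m ≤ n) (hr : 0 < r) {α β : MHG n r}
    (hβα : β ≤ α) (hβ : GoodMHG m β) : β ≤ barComponent m α := fun s => by
  unfold barComponent
  split_ifs with hs
  · exact hβα s
  · by_contra hβs
    apply hs
    rcases hβ with rfl | ⟨hconn, -⟩
    · exact absurd (Nat.zero_le 0) hβs
    obtain ⟨v, hv⟩ := Multiset.card_pos_iff_exists_mem.1 (s.2.symm ▸ hr)
    have hsβ : (s : Multiset (Fin n)) ∈ barGraph m β :=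
      Multiset.mem_cons_of_mem (mem_edgesOf (α := β) |>.2 ⟨s, (not_le.1 hβs).ne', rfl⟩)
    have h0 : (⟨0, hm.trans_le hmn⟩ : Fin n) ∈ barEdge n m := by simp [barEdge, hm]
    exact (MHConnected.reachable hconn (barEdge_mem_barGraph β) hsβ h0 hv).mono
      (meetGraph_mono (barGraph_subset hβα))

end BarComponent

section Complexity
variable {n r m : ℕ} {H : MHG n r → ℝ}

def IsComplexity (m : ℕ) (H : MHG n r → ℝ) : Prop :=
  H 0 = 1 ∧ ∀ α, α ≠ 0 → H α = ∑ β ∈ (Iio α).filter (GoodMHG m), (mhgChoose α β : ℝ) * H β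

lemma IsComplexity.nonneg (hH : IsComplexity m H) (α : MHG n r) : 0 ≤ H α := by
  induction α using WellFoundedLT.induction with
  | _ α ih =>
  rcases eq_or_ne α 0 with rfl | hα
  · exact hH.1 ▸ zero_le_one
  · rw [hH.2 α hα]
    exact sum_nonneg fun β hβ =>
      mul_nonneg (Nat.cast_nonneg _) (ih β (mem_Iio.1 (mem_filter.1 hβ).1))

lemma IsComplexity.eq_one_add (hH : IsComplexity m H) {α : MHG n r} (hα : α ≠ 0) :
    H α = 1 + ∑ β ∈ (Iio α).filter (fun β => GoodMHG m β ∧ β ≠ 0),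
      (mhgChoose α β : ℝ) * H β := by
  have h0 : (0 : MHG n r) ∈ (Iio α).filter (GoodMHG m) :=
    mem_filter.2 ⟨mem_Iio.2 (pos_iff_ne_zero.2 hα), Or.inl rfl⟩
  have herase : ((Iio α).filter (GoodMHG m)).erase 0 =
      (Iio α).filter (fun β => GoodMHG m β ∧ β ≠ 0) := by
    ext β
    simp only [mem_erase, mem_filter]
    tauto
  rw [hH.2 α hα, ← add_sum_erase _ _ h0, herase, mhgChoose_zero_right, hH.1, Nat.cast_one,
    one_mul]

end Complexity

section Cumulants
variable {n r m : ℕ} {π : Measure ℝ} {lam : ℝ} {κ : MHG n r → ℝ}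

def IsCumulant (π : Measure ℝ) (lam : ℝ) (m : ℕ) (κ : MHG n r → ℝ) : Prop :=
  ∀ α, κ α = barMoment π lam m α -
    ∑ β ∈ Iio α, (mhgChoose α β : ℝ) * edgeMoment π lam (α - β) * κ β

lemma IsCumulant.barMoment_eq_sum [IsProbabilityMeasure π] (hκ : IsCumulant π lam m κ)
    (α : MHG n r) :
    barMoment π lam m α = ∑ β ∈ Iic α, (mhgChoose α β : ℝ) * edgeMoment π lam (α - β) * κ β := by
  rw [← Iio_insert, sum_insert notMem_Iio_self, hκ α, mhgChoose_self, tsub_self, edgeMoment_zero]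
  ring

lemma IsCumulant.eq_zero_of_degM_eq_one (hκ : IsCumulant π lam m κ) (hmean : ∫ y, y ∂π = 0)
    {α : MHG n r} {v : Fin n} (hv : degM (barGraph m α) v = 1)
    (hsmall : ∀ β < α, degM (barGraph m β) v = 1 → κ β = 0) : κ α = 0 := by
  rw [hκ α, barMoment, momentProd_eq_zero hmean hv, mul_zero, zero_sub, neg_eq_zero]
  refine sum_eq_zero fun β hβ => ?_
  have hsplit := congrArg (degM · v) (barGraph_eq_edgesOf_sub_add (m := m) (mem_Iio.1 hβ).le)
  simp only [degM_add, hv] at hsplit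
  rcases (by omega : degM (edgesOf (α - β)) v = 1 ∨ degM (barGraph m β) v = 1) with h | h
  · rw [edgeMoment, momentProd_eq_zero hmean h, mul_zero, mul_zero, zero_mul]
  · rw [hsmall β (mem_Iio.1 hβ) h, mul_zero]

lemma IsCumulant.apply_zero (hκ : IsCumulant π lam m κ) (hmean : ∫ y, y ∂π = 0)
    (hm : 0 < m) (hmn : m ≤ n) : κ 0 = 0 :=
  hκ.eq_zero_of_degM_eq_one hmean (v := ⟨0, hm.trans_le hmn⟩)
    (by simp [barGraph, count_barEdge_of_lt (i := ⟨0, hm.trans_le hmn⟩) hm, edgesOf, degM])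
    fun _ hβ => (zero_le.not_gt hβ).elim

/-- The recursion for `γ + δ` factors as `E[X^δ]` times the recursion for `γ`. -/
lemma IsCumulant.eq_zero_of_split [IsProbabilityMeasure π] (hκ : IsCumulant π lam m κ)
    {γ δ : MHG n r} (hδ : δ ≠ 0) (hsupp : ∀ e, γ e = 0 ∨ δ e = 0)
    (hvert : ∀ i, degM (barGraph m γ) i = 0 ∨ degM (edgesOf δ) i = 0)
    (hsmall : ∀ β < γ + δ, κ β ≠ 0 → β ≤ γ) : κ (γ + δ) = 0 := by
  have hγ : γ < γ + δ := lt_add_of_pos_right γ (pos_iff_ne_zero.2 hδ)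
  have hsum : ∑ β ∈ Iio (γ + δ), (mhgChoose (γ + δ) β : ℝ) * edgeMoment π lam (γ + δ - β) * κ β =
      edgeMoment π lam δ *
        ∑ β ∈ Iic γ, (mhgChoose γ β : ℝ) * edgeMoment π lam (γ - β) * κ β := by
    rw [mul_sum, ← sum_subset (fun β hβ => mem_Iio.2 ((mem_Iic.1 hβ).trans_lt hγ))]
    · refine sum_congr rfl fun β hβ => ?_
      have hβγ := mem_Iic.1 hβ
      have hdisj : ∀ i, degM (edgesOf (γ - β)) i = 0 ∨ degM (edgesOf δ) i = 0 := fun i => by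
        have := congrArg (degM · i) (barGraph_eq_edgesOf_sub_add (m := m) hβγ)
        simp only [degM_add] at this
        rcases hvert i with h | h <;> [left; right] <;> omega
      rw [mhgChoose_add_of_disjoint hsupp hβγ, ← tsub_add_eq_add_tsub hβγ, edgeMoment_add hdisj]
      ring
    · intro β hβ hβγ
      have : κ β = 0 := by_contra fun h => hβγ (mem_Iic.2 (hsmall β (mem_Iio.1 hβ) h))
      rw [this, mul_zero]
  rw [hκ (γ + δ), hsum, ← hκ.barMoment_eq_sum γ, barMoment_add hvert]
  ring

theorem IsCumulant.eq_zero_of_not_good [IsProbabilityMeasure π] (hκ : IsCumulant π lam m κ)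
    (hmean : ∫ y, y ∂π = 0) (hm : 0 < m) (hmn : m ≤ n) (hr : 0 < r) (α : MHG n r)
    (hα : ¬GoodMHG m α) : κ α = 0 := by
  induction α using WellFoundedLT.induction with
  | _ α ih =>
  by_cases hdeg : ∃ v, degM (barGraph m α) v = 1
  · obtain ⟨v, hv⟩ := hdeg
    refine hκ.eq_zero_of_degM_eq_one hmean hv fun β hβ hβv => ?_
    rcases eq_or_ne β 0 with rfl | hβ0
    · exact hκ.apply_zero hmean hm hmn
    · refine ih β hβ ?_
      rintro (h | ⟨-, h⟩)
      · exact hβ0 h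
      · have := h v (by omega)
        omega
  · have hconn : ¬MHConnected (barGraph m α) := fun hconn =>
      hα (Or.inr ⟨hconn, fun i hi => by by_contra; exact hdeg ⟨i, by omega⟩⟩)
    have hγα : barComponent m α ≤ α := barComponent_le α
    have hδ : α - barComponent m α ≠ 0 := fun h =>
      hconn (mhConnected_of_barComponent_eq (le_antisymm hγα (tsub_eq_zero_iff_le.1 h)))
    have hsplit := hκ.eq_zero_of_split hδ (barComponent_disjoint α)
      (degM_barComponent_disjoint α) fun β hβ hκβ => by
        rw [add_tsub_cancel_of_le hγα] at hβ
        exact le_barComponent_of_good hm hmn hr hβ.le (by_contra fun hb => hκβ (ih β hβ hb))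
    rwa [add_tsub_cancel_of_le hγα] at hsplit

theorem IsCumulant.abs_le [IsProbabilityMeasure π] (hκ : IsCumulant π lam m κ)
    (hlam : 0 ≤ lam) (hvar : ∫ y, y ^ 2 ∂π = 1)
    (hmom : ∀ t : ℕ, Integrable (fun y : ℝ => |y| ^ t) π) (hzero : κ 0 = 0)
    (hbad : ∀ β, ¬GoodMHG m β → κ β = 0) {H : MHG n r → ℝ} (hH : IsComplexity m H)
    (α : MHG n r) :
    |κ α| ≤ lam ^ edgeCount α * Mmom π (excessDeg (barGraph m α)) * H α := by
  induction α using WellFoundedLT.induction with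
  | _ α ih =>
  set C := lam ^ edgeCount α * Mmom π (excessDeg (barGraph m α))
  rcases eq_or_ne α 0 with rfl | hα
  · rw [hzero, abs_zero]
    exact mul_nonneg (mul_nonneg (pow_nonneg hlam _) (zero_le_one.trans (one_le_Mmom _)))
      (hH.nonneg 0)
  have hterm : ∀ β ∈ (Iio α).filter (fun β => GoodMHG m β ∧ β ≠ 0),
      |(mhgChoose α β : ℝ) * edgeMoment π lam (α - β) * κ β| ≤ C * ((mhgChoose α β : ℝ) * H β) :=
    fun β hβ => by
    have hβα := mem_Iio.1 (mem_filter.1 hβ).1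
    have hE := abs_edgeMoment_sub_mul_le (m := m) hlam hvar hmom hβα.le
    rw [abs_mul, abs_mul, Nat.abs_cast]
    calc (mhgChoose α β : ℝ) * |edgeMoment π lam (α - β)| * |κ β|
        ≤ (mhgChoose α β : ℝ) * |edgeMoment π lam (α - β)| *
            (lam ^ edgeCount β * Mmom π (excessDeg (barGraph m β)) * H β) := by
          gcongr
          exact ih β hβα
      _ = (mhgChoose α β : ℝ) * (|edgeMoment π lam (α - β)| *
            (lam ^ edgeCount β * Mmom π (excessDeg (barGraph m β)))) * H β := by ring
      _ ≤ (mhgChoose α β : ℝ) * C * H β := by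
          gcongr
          exact hH.nonneg β
      _ = C * ((mhgChoose α β : ℝ) * H β) := by ring
  have hrestrict := sum_filter_of_ne (p := fun β => GoodMHG m β ∧ β ≠ 0) (s := Iio α)
    (f := fun β => |(mhgChoose α β : ℝ) * edgeMoment π lam (α - β) * κ β|) fun β _ hβ => by
      refine ⟨by_contra fun hb => hβ ?_, fun h0 => hβ ?_⟩ <;> simp [hbad β, *]
  rw [hκ α, hH.eq_one_add hα, mul_add, mul_one, mul_sum]
  refine (abs_sub _ _).trans (add_le_add (abs_barMoment_le hlam hvar hmom α) ?_)
  exact (abs_sum_le_sum_abs _ _).trans (hrestrict ▸ sum_le_sum hterm)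

end Cumulants

end TensorPCA

/-- Lemma 6.2: cumulant bound for tensor PCA with a general prior.  With
𝓗(0) = 1 and 𝓗(α) = Σ_{β < α, β good} binom(α,β)·𝓗(β), for every good α one has
|κ_α| ≤ λ^{|α|}·M(δ(ᾱ))·𝓗(α). -/
theorem cumulant_bound_general_prior (n r m : ℕ) (hr : 2 ≤ r) (hm : 2 ≤ m)
    (hmn : m ≤ n) (lam : ℝ) (hlam : 0 ≤ lam)
    (π : Measure ℝ) [IsProbabilityMeasure π]
    (hmean : (∫ y, y ∂π) = 0) (hvar : (∫ y, y ^ 2 ∂π) = 1)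
    (hmom : ∀ t : ℕ, Integrable (fun y : ℝ => |y| ^ t) π)
    (κ : MHG n r → ℝ)
    (hκ : ∀ α : MHG n r, κ α =
      (∫ θ, xEst m hmn θ * XPow lam θ α ∂(Measure.pi fun _ : Fin n => π)) -
        ∑ β ∈ (Finset.Iic α).erase α,
          (mhgChoose α β : ℝ) *
            (∫ θ, XPow lam θ (α - β) ∂(Measure.pi fun _ : Fin n => π)) * κ β)
    (H : MHG n r → ℝ) (hH0 : H 0 = 1)
    (hHrec : ∀ α : MHG n r, α ≠ 0 → H α =
      ∑ β ∈ ((Finset.Iic α).erase α).filter (fun β => GoodMHG m β),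
        (mhgChoose α β : ℝ) * H β) :
    ∀ α : MHG n r, GoodMHG m α →
      |κ α| ≤ lam ^ edgeCount α * Mmom π (excessDeg (barGraph m α)) * H α := by
  have hκ' : TensorPCA.IsCumulant π lam m κ := fun α => by
    simpa only [TensorPCA.integral_xEst_mul_XPow, TensorPCA.integral_XPow, Finset.Iic_erase]
      using hκ α
  have hH : TensorPCA.IsComplexity m H :=
    ⟨hH0, fun α hα => by simpa only [Finset.Iic_erase] using hHrec α hα⟩
  intro α _
  exact hκ'.abs_le hlam hvar hmom (hκ'.apply_zero hmean (by omega) hmn)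
    (hκ'.eq_zero_of_not_good hmean (by omega) hmn (by omega)) hH α
end

section
/- Counting good multi-hypergraphs (Lemma 6.5): Fix integers r ≥ 2 and m ≥ 2. There exists a constant C = C(r,m) > 0 such that for all integers k, ℓ ≥ 1 with m ≤ k ≤ rℓ, the number of good r-uniform multi-hypergraphs α on [n] with |V(α)| = k and |α| = ℓ is at most (C·n/k)^{k−m} · (C·k^{r−1})^ℓ. -/
open MeasureTheory

/-!
A nonzero good `α` has `[m] ⊆ V(α)`, so `V(α)` is determined by the `k - m` vertices outside
`[m]`, giving at most `n.choose (k - m)` choices. Given `V(α)`, listing it increasingly as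
`Fin k ↪ Fin n`, the multi-hypergraph `α` is determined by its pullback to `Fin k`: a function on
the `k.multichoose r ≤ k ^ r` multisets of size `r` in `Fin k` with total mass `ℓ`, of which there
are `(k.multichoose r).multichoose ℓ`. Both factors are then bounded through
`a.choose j ≤ (e a / j) ^ j`, using `k ≤ (m + 1) (k - m)` and `k ≤ r ℓ`.
-/

open Finset Real

theorem Sym.exists_map_eq_of_forall_mem_range {X Y : Type*} {g : X → Y} {r : ℕ} (s : Sym Y r)
    (hs : ∀ y ∈ s, y ∈ Set.range g) : ∃ e : Sym X r, e.map g = s := by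
  choose f hf using hs
  refine ⟨s.attach.map fun y => f y.1 y.2, ?_⟩
  conv_rhs => rw [← s.attach_map_coe]
  rw [Sym.map_map]
  exact Sym.map_congr fun y _ => hf _ _

theorem Nat.multichoose_le_pow : ∀ a b : ℕ, a.multichoose b ≤ a ^ b
  | _, 0 => by simp
  | 0, _ + 1 => by simp
  | a + 1, b + 1 => by
    have h₁ := Nat.multichoose_le_pow a (b + 1)
    have h₂ := Nat.multichoose_le_pow (a + 1) b
    have h₃ : a ^ b ≤ (a + 1) ^ b := Nat.pow_le_pow_left a.le_succ b
    rw [pow_succ] at h₁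
    rw [Nat.multichoose_succ_succ, pow_succ]
    nlinarith

theorem natCard_subtype_sum_eq_multichoose (X : Type*) [Fintype X] [DecidableEq X] (l : ℕ) :
    Nat.card {P : X → ℕ // ∑ x, P x = l} = (Fintype.card X).multichoose l := by
  rw [← Nat.card_congr (Sym.equivNatSumOfFintype X l), Sym.natCard_sym_eq_multichoose,
    Nat.card_eq_fintype_card]

theorem Nat.choose_le_exp_mul_div_pow (n j : ℕ) : (n.choose j : ℝ) ≤ (exp 1 * n / j) ^ j := by
  rcases j.eq_zero_or_pos with rfl | hj
  · simp
  have hfact : (j : ℝ) ^ j / j.factorial ≤ exp 1 ^ j := by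
    rw [← Real.exp_nat_mul, mul_one]
    exact pow_div_factorial_le_exp _ (by positivity) j
  calc (n.choose j : ℝ) ≤ n ^ j / j.factorial := Nat.choose_le_pow_div j n
    _ = (n / j) ^ j * ((j : ℝ) ^ j / j.factorial) := by rw [div_pow]; field_simp
    _ ≤ (n / j) ^ j * exp 1 ^ j := by gcongr
    _ = (exp 1 * n / j) ^ j := by rw [← mul_pow]; ring

theorem Nat.multichoose_le_exp_mul_div_pow (a l : ℕ) :
    (a.multichoose l : ℝ) ≤ (exp 1 * (a + l) / l) ^ l := by
  rw [Nat.multichoose_eq]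
  refine (Nat.choose_le_exp_mul_div_pow _ _).trans ?_
  gcongr
  exact_mod_cast Nat.sub_le _ _

theorem choose_sub_le_pow {n k m : ℕ} {C : ℝ} (hC : exp 1 * (m + 1) ≤ C) (hmk : m ≤ k) :
    (n.choose (k - m) : ℝ) ≤ (C * n / k) ^ (k - m) := by
  rcases (k - m).eq_zero_or_pos with hj | hj
  · simp [hj]
  refine (Nat.choose_le_exp_mul_div_pow n (k - m)).trans (pow_le_pow_left₀ (by positivity) ?_ _)
  have hk_le : (k : ℝ) ≤ (m + 1) * (k - m : ℕ) := by
    have : k ≤ (m + 1) * (k - m) := by nlinarith [Nat.sub_add_cancel hmk]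
    exact_mod_cast this
  rw [div_le_div_iff₀ (by exact_mod_cast hj) (by exact_mod_cast (show 0 < k by omega))]
  calc exp 1 * n * k ≤ exp 1 * n * ((m + 1) * (k - m : ℕ)) := by gcongr
    _ = exp 1 * (m + 1) * n * (k - m : ℕ) := by ring
    _ ≤ C * n * (k - m : ℕ) := by gcongr

theorem multichoose_multichoose_le_pow {k r l : ℕ} {C : ℝ} (hC : exp 1 * (r + 1) ≤ C)
    (hk : 1 ≤ k) (hl : 1 ≤ l) (hkrl : k ≤ r * l) :
    ((k.multichoose r).multichoose l : ℝ) ≤ (C * (k : ℝ) ^ (r - 1)) ^ l := by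
  refine (Nat.multichoose_le_exp_mul_div_pow _ l).trans (pow_le_pow_left₀ (by positivity) ?_ l)
  have hN : ((k.multichoose r : ℕ) : ℝ) ≤ (k : ℝ) ^ (r - 1) * (r * l) := by
    calc ((k.multichoose r : ℕ) : ℝ) ≤ (k : ℝ) ^ r := by exact_mod_cast Nat.multichoose_le_pow k r
      _ ≤ (k : ℝ) ^ (r - 1 + 1) := pow_le_pow_right₀ (by exact_mod_cast hk) (by omega)
      _ = (k : ℝ) ^ (r - 1) * k := pow_succ _ _
      _ ≤ (k : ℝ) ^ (r - 1) * (r * l) := by gcongr; exact_mod_cast hkrl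
  have hone : (1 : ℝ) ≤ (k : ℝ) ^ (r - 1) := one_le_pow₀ (by exact_mod_cast hk)
  rw [div_le_iff₀ (by positivity)]
  calc exp 1 * ((k.multichoose r : ℕ) + l)
      ≤ exp 1 * ((k : ℝ) ^ (r - 1) * (r * l) + (k : ℝ) ^ (r - 1) * l) := by
        gcongr; exact le_mul_of_one_le_left (by positivity) hone
    _ = exp 1 * (r + 1) * (k : ℝ) ^ (r - 1) * l := by ring
    _ ≤ C * (k : ℝ) ^ (r - 1) * l := by gcongr

section

variable {n r : ℕ} {X : Type*} {g : X → Fin n}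

def vertexSet (α : MHG n r) : Finset (Fin n) := {i | 0 < degM (edgesOf α) i}

theorem card_vertexSet (α : MHG n r) : #(vertexSet α) = vertexCount α := rfl

theorem degM_edgesOf (α : MHG n r) (i : Fin n) :
    degM (edgesOf α) i = ∑ e, α e * (e : Multiset (Fin n)).count i := by
  simp only [degM, edgesOf, ← Multiset.coe_mapAddMonoidHom, map_sum,
    ← Multiset.coe_sumAddMonoidHom]
  simp

theorem mem_vertexSet {α : MHG n r} {i : Fin n} :
    i ∈ vertexSet α ↔ ∃ e, 0 < α e ∧ i ∈ (e : Multiset (Fin n)) := by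
  simp [vertexSet, degM_edgesOf, Finset.sum_pos_iff, Nat.pos_iff_ne_zero]

theorem vertexSet_zero : vertexSet (0 : MHG n r) = ∅ := by
  ext; simp [mem_vertexSet]

theorem GoodMHG.filter_val_lt_subset_vertexSet {m : ℕ} {α : MHG n r} (hα : GoodMHG m α)
    (h0 : α ≠ 0) :
    ({i | (i : ℕ) < m} : Finset (Fin n)) ⊆ vertexSet α := by
  intro i hi
  have hbar : (barEdge n m).count i = 1 :=
    Multiset.count_eq_one_of_mem (Finset.nodup _) (by simpa [barEdge] using hi)
  have hdeg : degM (barGraph m α) i = 1 + degM (edgesOf α) i := by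
    simp [barGraph, degM, hbar]
  have := (hα.resolve_left h0).2 i (by omega)
  simp only [vertexSet, mem_filter, mem_univ, true_and]
  omega

theorem mem_vertexSet_of_pos {α : MHG n r} {s : Sym (Fin n) r} (hs : 0 < α s) {i : Fin n}
    (hi : i ∈ s) : i ∈ vertexSet α :=
  mem_vertexSet.2 ⟨s, hs, hi⟩

theorem exists_map_eq_of_pos {α : MHG n r} (hα : ↑(vertexSet α) ⊆ Set.range g)
    {s : Sym (Fin n) r} (hs : 0 < α s) : ∃ e : Sym X r, e.map g = s :=
  s.exists_map_eq_of_forall_mem_range fun _ hi => hα (mem_vertexSet_of_pos hs hi)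

theorem eq_of_comp_symMap_eq {α β : MHG n r} (hα : ↑(vertexSet α) ⊆ Set.range g)
    (hβ : ↑(vertexSet β) ⊆ Set.range g) (h : α ∘ Sym.map g = β ∘ Sym.map g) : α = β := by
  funext s
  by_cases hs : 0 < α s ∨ 0 < β s
  · obtain ⟨e, rfl⟩ := hs.elim (exists_map_eq_of_pos hα) (exists_map_eq_of_pos hβ)
    exact congrFun h e
  · omega

theorem sum_comp_symMap [Fintype X] [DecidableEq X] (hg : Function.Injective g) {α : MHG n r}
    (hα : ↑(vertexSet α) ⊆ Set.range g) : ∑ e : Sym X r, α (e.map g) = edgeCount α := by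
  rw [edgeCount, ← Finset.sum_image fun _ _ _ _ h => Sym.map_injective hg r h]
  refine Finset.sum_subset (subset_univ _) fun s _ hs => ?_
  by_contra hne
  obtain ⟨e, rfl⟩ := exists_map_eq_of_pos hα (Nat.pos_of_ne_zero hne)
  exact hs (mem_image_of_mem _ (mem_univ e))

end

theorem natCard_goodMHG_le {n r m k l : ℕ} (hmn : m ≤ n) (hk : 0 < k) :
    Nat.card {α : MHG n r // GoodMHG m α ∧ vertexCount α = k ∧ edgeCount α = l} ≤
      n.choose (k - m) * (k.multichoose r).multichoose l := by
  let Good := {α : MHG n r // GoodMHG m α ∧ vertexCount α = k ∧ edgeCount α = l}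
  set bar : Finset (Fin n) := {i | (i : ℕ) < m}
  have hbar (α : Good) : bar ⊆ vertexSet α.1 := by
    obtain ⟨α, hgood, hαk, -⟩ := α
    refine hgood.filter_val_lt_subset_vertexSet ?_
    rintro rfl
    rw [← card_vertexSet, vertexSet_zero, card_empty] at hαk
    omega
  have hcard_bar : #bar = m := by simp [bar, Fin.card_filter_val_lt, hmn]
  let emb (α : Good) : Fin k ↪o Fin n := (vertexSet α.1).orderEmbOfFin α.2.2.1
  have hrange (α : Good) : ↑(vertexSet α.1) ⊆ Set.range (emb α) :=
    (range_orderEmbOfFin _ _).superset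
  let f (α : Good) :
      {S : Finset (Fin n) // #S = k - m} × {P : Sym (Fin k) r → ℕ // ∑ e, P e = l} :=
    (⟨vertexSet α.1 \ bar, by
        rw [card_sdiff_of_subset (hbar α), card_vertexSet, α.2.2.1, hcard_bar]⟩,
      ⟨α.1 ∘ Sym.map (emb α), (sum_comp_symMap (emb α).injective (hrange α)).trans α.2.2.2⟩)
  have hf : Function.Injective f := by
    intro α β hαβ
    simp only [f, Prod.mk.injEq, Subtype.mk.injEq] at hαβ
    have hV : vertexSet α.1 = vertexSet β.1 := by
      rw [← sdiff_union_of_subset (hbar α), ← sdiff_union_of_subset (hbar β), hαβ.1]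
    have hemb : emb α = emb β := by simp only [emb, hV]
    refine Subtype.ext (eq_of_comp_symMap_eq (hrange α) ?_ ?_)
    · rw [hemb]; exact hrange β
    · rw [hαβ.2, hemb]
  have : Finite {P : Sym (Fin k) r → ℕ // ∑ e, P e = l} :=
    .of_equiv _ (Sym.equivNatSumOfFintype _ l)
  calc Nat.card Good ≤ _ := Nat.card_le_card_of_injective f hf
    _ = n.choose (k - m) * (k.multichoose r).multichoose l := by
      rw [Nat.card_prod, Nat.card_eq_fintype_card (α := {S : Finset (Fin n) // _}),
        Fintype.card_finset_len, Fintype.card_fin, natCard_subtype_sum_eq_multichoose,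
        Sym.card_sym_fin_eq_multichoose]

theorem counting_good_multihypergraphs_general (r m : ℕ) :
    ∃ C : ℝ, 0 < C ∧ ∀ n k l : ℕ, m ≤ n → 1 ≤ k → 1 ≤ l → m ≤ k → k ≤ r * l →
      (Nat.card {α : MHG n r // GoodMHG m α ∧ vertexCount α = k ∧ edgeCount α = l} : ℝ) ≤
        (C * n / k) ^ (k - m) * (C * (k : ℝ) ^ (r - 1)) ^ l := by
  refine ⟨exp 1 * (m + r + 1), by positivity, fun n k l hmn hk hl hmk hkrl => ?_⟩
  have hCm : exp 1 * (m + 1) ≤ exp 1 * (m + r + 1) := by gcongr; simp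
  have hCr : exp 1 * (r + 1) ≤ exp 1 * (m + r + 1) := by gcongr; simp
  calc (Nat.card {α : MHG n r // GoodMHG m α ∧ vertexCount α = k ∧ edgeCount α = l} : ℝ)
      ≤ n.choose (k - m) * (k.multichoose r).multichoose l := by
        exact_mod_cast natCard_goodMHG_le hmn hk
    _ ≤ _ := mul_le_mul (choose_sub_le_pow hCm hmk)
        (multichoose_multichoose_le_pow hCr hk hl hkrl) (by positivity) (by positivity)

/-- Lemma 6.5: counting good multi-hypergraphs.  There is a constant C = C(r,m) such
that for all k, ℓ ≥ 1 with m ≤ k ≤ rℓ, the number of good r-uniform multi-hypergraphs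
on [n] with k non-isolated vertices and ℓ edges is at most (Cn/k)^{k−m}·(Ck^{r−1})^ℓ. -/
theorem counting_good_multihypergraphs (r m : ℕ) (hr : 2 ≤ r) (hm : 2 ≤ m) :
    ∃ C : ℝ, 0 < C ∧ ∀ n k l : ℕ, m ≤ n → 1 ≤ k → 1 ≤ l → m ≤ k → k ≤ r * l →
      (Nat.card {α : MHG n r // GoodMHG m α ∧ vertexCount α = k ∧ edgeCount α = l} : ℝ) ≤
        (C * n / k) ^ (k - m) * (C * (k : ℝ) ^ (r - 1)) ^ l :=
  counting_good_multihypergraphs_general r m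
end
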